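/- arXiv:0705.3301 — 4 statements merged into one kernel-verified Lean document; each statement's English description precedes it below -/
import Mathlib

section
/- If u : ℝⁿ → ℝ is an entire biharmonic function (Δ²u = 0 on ℝⁿ) satisfying |u(x)| ≤ C(1+|x|)^{4−n} for some constant C and n ≥ 5, then u ≡ 0. -/
open MeasureTheory Filter Metric Topology

noncomputable def lap {n : ℕ} (f : EuclideanSpace ℝ (Fin n) → ℝ) (x : EuclideanSpace ℝ (Fin n)) : ℝ :=
  ∑ i : Fin n, fderiv ℝ (fun y => fderiv ℝ f y (EuclideanSpace.single i 1)) x (EuclideanSpace.single i 1)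

noncomputable def biharm {n : ℕ} (f : EuclideanSpace ℝ (Fin n) → ℝ) : EuclideanSpace ℝ (Fin n) → ℝ :=
  lap (lap f)

/- ### cutoff functions -/
noncomputable def psi0 : ℝ → ℝ := fun s => max (1 - s) 0
noncomputable def psi1 : ℝ → ℝ := fun s => (1/2) * ∫ t in (1:ℝ)..s, psi0 t
noncomputable def psi2 : ℝ → ℝ := fun s => (1/2) * ∫ t in (1:ℝ)..s, psi1 t

lemma psi0_cont : Continuous psi0 := (continuous_const.sub continuous_id).max continuous_const

lemma psi0_nonneg (s : ℝ) : 0 ≤ psi0 s := le_max_right _ _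

lemma psi0_eq_zero {s : ℝ} (h : 1 ≤ s) : psi0 s = 0 := max_eq_right (by linarith)

lemma psi0_pos {s : ℝ} (h : s < 1) : 0 < psi0 s := lt_max_of_lt_left (by linarith)

lemma psi1_hasDeriv (s : ℝ) : HasDerivAt psi1 (psi0 s / 2) s := by
  have h := intervalIntegral.integral_hasDerivAt_right
    (psi0_cont.intervalIntegrable 1 s)
    (psi0_cont.stronglyMeasurableAtFilter volume (nhds s))
    psi0_cont.continuousAt
  have h2 := h.const_mul (1/2 : ℝ)
  exact h2.congr_deriv (by ring)

lemma psi1_cont : Continuous psi1 :=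
  Differentiable.continuous (fun s => (psi1_hasDeriv s).differentiableAt)

lemma psi1_eq_zero {s : ℝ} (h : 1 ≤ s) : psi1 s = 0 := by
  have : ∫ t in (1:ℝ)..s, psi0 t = ∫ t in (1:ℝ)..s, (0:ℝ) := by
    apply intervalIntegral.integral_congr
    intro t ht
    rw [Set.uIcc_of_le h] at ht
    exact psi0_eq_zero ht.1
  simp [psi1, this]

lemma psi2_hasDeriv (s : ℝ) : HasDerivAt psi2 (psi1 s / 2) s := by
  have h := intervalIntegral.integral_hasDerivAt_right
    (psi1_cont.intervalIntegrable 1 s)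
    (psi1_cont.stronglyMeasurableAtFilter volume (nhds s))
    psi1_cont.continuousAt
  have h2 := h.const_mul (1/2 : ℝ)
  exact h2.congr_deriv (by ring)

lemma psi2_eq_zero {s : ℝ} (h : 1 ≤ s) : psi2 s = 0 := by
  have : ∫ t in (1:ℝ)..s, psi1 t = ∫ t in (1:ℝ)..s, (0:ℝ) := by
    apply intervalIntegral.integral_congr
    intro t ht
    rw [Set.uIcc_of_le h] at ht
    exact psi1_eq_zero ht.1
  simp [psi2, this]
/- ### the squared-norm function -/
noncomputable def Sfun {n : ℕ} : EuclideanSpace ℝ (Fin n) → ℝ := fun y => ∑ i, (y i)^2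

lemma Sfun_eq_normsq {n : ℕ} (y : EuclideanSpace ℝ (Fin n)) : Sfun y = ‖y‖^2 := by
  rw [EuclideanSpace.norm_eq, Real.sq_sqrt (by positivity)]
  simp [Sfun, sq_abs]

lemma Sfun_cont {n : ℕ} : Continuous (Sfun (n := n)) := by
  apply continuous_finset_sum
  intro i _
  exact ((EuclideanSpace.proj (𝕜 := ℝ) i).continuous).pow 2

noncomputable def gradS {n : ℕ} (y : EuclideanSpace ℝ (Fin n)) :
    EuclideanSpace ℝ (Fin n) →L[ℝ] ℝ :=
  ∑ i, (2 * y i) • (EuclideanSpace.proj (𝕜 := ℝ) i)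

lemma hasFDerivAt_Sfun {n : ℕ} (y : EuclideanSpace ℝ (Fin n)) :
    HasFDerivAt Sfun (gradS y) y := by
  have : HasFDerivAt (fun z : EuclideanSpace ℝ (Fin n) => ∑ i, (z i)^2) (gradS y) y := by
    apply HasFDerivAt.fun_sum
    intro i _
    have h1 : HasDerivAt (fun t : ℝ => t^2) (2 * y i) (y i) := by
      simpa using hasDerivAt_pow 2 (y i)
    have h2 : HasFDerivAt (fun z : EuclideanSpace ℝ (Fin n) => z i)
        (EuclideanSpace.proj (𝕜 := ℝ) i) y := (EuclideanSpace.proj (𝕜 := ℝ) i).hasFDerivAt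
    exact h1.comp_hasFDerivAt y h2
  exact this

lemma gradS_apply_single {n : ℕ} (y : EuclideanSpace ℝ (Fin n)) (i : Fin n) :
    gradS y (EuclideanSpace.single i 1) = 2 * y i := by
  simp [gradS, ContinuousLinearMap.sum_apply, PiLp.proj_apply,
    EuclideanSpace.single_apply]

/- radial composition -/
lemma radial_hasFDerivAt {n : ℕ} (ψ ψd : ℝ → ℝ) (hψ : ∀ s, HasDerivAt ψ (ψd s) s)
    (y : EuclideanSpace ℝ (Fin n)) :
    HasFDerivAt (fun z => ψ (Sfun z)) (ψd (Sfun y) • gradS y) y :=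
  (hψ (Sfun y)).comp_hasFDerivAt y (hasFDerivAt_Sfun y)

lemma radial_fderiv_single {n : ℕ} (ψ ψd : ℝ → ℝ) (hψ : ∀ s, HasDerivAt ψ (ψd s) s)
    (y : EuclideanSpace ℝ (Fin n)) (i : Fin n) :
    fderiv ℝ (fun z => ψ (Sfun z)) y (EuclideanSpace.single i 1)
      = ψd (Sfun y) * (2 * y i) := by
  rw [(radial_hasFDerivAt ψ ψd hψ y).fderiv]
  simp [gradS_apply_single]

lemma clm_decomp {n : ℕ} (T : EuclideanSpace ℝ (Fin n) →L[ℝ] ℝ) (y : EuclideanSpace ℝ (Fin n)) :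
    T y = ∑ i, y i * T (EuclideanSpace.single i (1:ℝ)) := by
  conv_lhs => rw [← (EuclideanSpace.basisFun (Fin n) ℝ).sum_repr y]
  rw [map_sum]
  simp [smul_eq_mul, EuclideanSpace.basisFun_apply, EuclideanSpace.basisFun_repr]
/- ### the weights -/
section weights
variable {n : ℕ}

noncomputable def wfun : EuclideanSpace ℝ (Fin n) → ℝ := fun y => psi0 (Sfun y)
noncomputable def Vfun : EuclideanSpace ℝ (Fin n) → ℝ := fun y => psi1 (Sfun y)
noncomputable def V2fun : EuclideanSpace ℝ (Fin n) → ℝ := fun y => psi2 (Sfun y)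

lemma wfun_cont : Continuous (wfun (n := n)) := psi0_cont.comp Sfun_cont
lemma Vfun_cont : Continuous (Vfun (n := n)) := psi1_cont.comp Sfun_cont
lemma V2fun_cont : Continuous (V2fun (n := n)) :=
  (Differentiable.continuous (fun s => (psi2_hasDeriv s).differentiableAt)).comp Sfun_cont

lemma support_subset_of_vanish {f : ℝ → ℝ} (hf : ∀ s, 1 ≤ s → f s = 0) :
    Function.support (fun y : EuclideanSpace ℝ (Fin n) => f (Sfun y)) ⊆ closedBall 0 1 := by
  intro y hy
  simp only [Function.mem_support] at hy
  by_contra hmem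
  apply hy
  apply hf
  rw [Sfun_eq_normsq]
  have : 1 < ‖y‖ := by
    simpa [mem_closedBall, dist_zero_right] using not_le.1 (fun h => hmem (by simpa [mem_closedBall, dist_zero_right] using h))
  nlinarith

lemma wfun_hcs : HasCompactSupport (wfun (n := n)) :=
  HasCompactSupport.of_support_subset_isCompact (isCompact_closedBall 0 1)
    (support_subset_of_vanish (fun s hs => psi0_eq_zero hs))

lemma Vfun_hcs : HasCompactSupport (Vfun (n := n)) :=
  HasCompactSupport.of_support_subset_isCompact (isCompact_closedBall 0 1)
    (support_subset_of_vanish (fun s hs => psi1_eq_zero hs))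

lemma V2fun_hcs : HasCompactSupport (V2fun (n := n)) :=
  HasCompactSupport.of_support_subset_isCompact (isCompact_closedBall 0 1)
    (support_subset_of_vanish (fun s hs => psi2_eq_zero hs))

lemma Vfun_diff : Differentiable ℝ (Vfun (n := n)) :=
  fun y => (radial_hasFDerivAt psi1 (fun s => psi0 s / 2) psi1_hasDeriv y).differentiableAt

lemma V2fun_diff : Differentiable ℝ (V2fun (n := n)) :=
  fun y => (radial_hasFDerivAt psi2 (fun s => psi1 s / 2) psi2_hasDeriv y).differentiableAt

lemma Vfun_fderiv (y : EuclideanSpace ℝ (Fin n)) (i : Fin n) :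
    fderiv ℝ Vfun y (EuclideanSpace.single i 1) = y i * wfun y := by
  have := radial_fderiv_single psi1 (fun s => psi0 s / 2) psi1_hasDeriv y i
  rw [show (fderiv ℝ Vfun y) = fderiv ℝ (fun z => psi1 (Sfun z)) y from rfl, this]
  simp [wfun]; ring

lemma V2fun_fderiv (y : EuclideanSpace ℝ (Fin n)) (i : Fin n) :
    fderiv ℝ V2fun y (EuclideanSpace.single i 1) = y i * Vfun y := by
  have := radial_fderiv_single psi2 (fun s => psi1 s / 2) psi2_hasDeriv y i
  rw [show (fderiv ℝ V2fun y) = fderiv ℝ (fun z => psi2 (Sfun z)) y from rfl, this]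
  simp [Vfun]; ring

lemma wfun_nonneg (y : EuclideanSpace ℝ (Fin n)) : 0 ≤ wfun y := psi0_nonneg _

lemma wfun_integral_pos [NeZero n] : 0 < ∫ y : EuclideanSpace ℝ (Fin n), wfun y := by
  rw [integral_pos_iff_support_of_nonneg wfun_nonneg
    (wfun_cont.integrable_of_hasCompactSupport wfun_hcs)]
  have hsub : ball (0 : EuclideanSpace ℝ (Fin n)) 1 ⊆ Function.support wfun := by
    intro y hy
    simp only [mem_ball, dist_zero_right] at hy
    simp only [Function.mem_support, wfun]
    have : Sfun y < 1 := by rw [Sfun_eq_normsq]; nlinarith [norm_nonneg y]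
    exact ne_of_gt (psi0_pos this)
  exact lt_of_lt_of_le (measure_ball_pos volume 0 one_pos) (measure_mono hsub)

end weights
/- ### integrability helper -/
lemma int_helper {n : ℕ} {A B : EuclideanSpace ℝ (Fin n) → ℝ}
    (hA : Continuous A) (hB : Continuous B) (hcs : HasCompactSupport B) :
    Integrable (fun y => A y * B y) volume := by
  apply Continuous.integrable_of_hasCompactSupport (hA.mul hB)
  exact hcs.mul_left

/- ### the Green / integration by parts step -/
lemma green_step {n : ℕ} (h : EuclideanSpace ℝ (Fin n) → ℝ) (hh : ContDiff ℝ 2 h)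
    (W Wp : EuclideanSpace ℝ (Fin n) → ℝ) (hWc : Continuous W) (hWs : HasCompactSupport W)
    (hWpd : Differentiable ℝ Wp) (hWps : HasCompactSupport Wp)
    (hWpW : ∀ y i, fderiv ℝ Wp y (EuclideanSpace.single i 1) = y i * W y)
    (x : EuclideanSpace ℝ (Fin n)) (r : ℝ) :
    ∫ y, (fderiv ℝ h (x + r • y) y) * W y
      = -(r * ∫ y, lap h (x + r • y) * Wp y) := by
  set b : Fin n → EuclideanSpace ℝ (Fin n) := fun i => EuclideanSpace.single i 1 with hb
  set gfun : Fin n → EuclideanSpace ℝ (Fin n) → ℝ := fun i z => fderiv ℝ h z (b i) with hgfun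
  set g2fun : Fin n → EuclideanSpace ℝ (Fin n) → ℝ :=
    fun i z => fderiv ℝ (gfun i) z (b i) with hg2fun
  set f : Fin n → EuclideanSpace ℝ (Fin n) → ℝ := fun i y => gfun i (x + r • y) with hf
  have hWpc : Continuous Wp := hWpd.continuous
  have haff : ContDiff ℝ 1 (fun y : EuclideanSpace ℝ (Fin n) => x + r • y) :=
    contDiff_const.add (contDiff_id.const_smul r)
  have haffc : Continuous (fun y : EuclideanSpace ℝ (Fin n) => x + r • y) := haff.continuous
  have hgC1 : ∀ i, ContDiff ℝ 1 (gfun i) := fun i =>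
    (hh.fderiv_right (by norm_num)).clm_apply contDiff_const
  have hg2C : ∀ i, Continuous (g2fun i) := fun i =>
    (((hgC1 i).continuous_fderiv one_ne_zero).clm_apply continuous_const)
  have hfC1 : ∀ i, ContDiff ℝ 1 (f i) := fun i => (hgC1 i).comp haff
  have hYc : ∀ i : Fin n, Continuous (fun y : EuclideanSpace ℝ (Fin n) => y i) := fun i =>
    (EuclideanSpace.proj (𝕜 := ℝ) i).continuous
  have hfd : ∀ i y, HasFDerivAt (f i)
      ((fderiv ℝ (gfun i) (x + r • y)).comp (r • ContinuousLinearMap.id ℝ _)) y := by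
    intro i y
    have hA : HasFDerivAt (fun y : EuclideanSpace ℝ (Fin n) => x + r • y)
        (r • ContinuousLinearMap.id ℝ _) y := ((hasFDerivAt_id y).const_smul r).const_add x
    exact (((hgC1 i).differentiable one_ne_zero _).hasFDerivAt).comp y hA
  have hfderiv_eval : ∀ i y, fderiv ℝ (f i) y (b i) = r * g2fun i (x + r • y) := by
    intro i y
    rw [(hfd i y).fderiv]
    simp [g2fun, ContinuousLinearMap.comp_apply, _root_.map_smul, smul_eq_mul]
  have key1 : (fun y => fderiv ℝ h (x + r • y) y * W y)
      = fun y => ∑ i, f i y * fderiv ℝ Wp y (b i) := by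
    funext y
    rw [clm_decomp (fderiv ℝ h (x + r • y)) y, Finset.sum_mul]
    refine Finset.sum_congr rfl fun i _ => ?_
    rw [hWpW]
    show y i * gfun i (x + r • y) * W y = f i y * (y i * W y)
    ring
  have int1 : ∀ i : Fin n, Integrable (fun y => f i y * fderiv ℝ Wp y (b i)) volume := by
    intro i
    have : (fun y => f i y * fderiv ℝ Wp y (b i)) = fun y => (f i y * y i) * W y := by
      funext y; rw [hWpW]; ring
    rw [this]
    exact int_helper (((hfC1 i).continuous).mul (hYc i)) hWc hWs
  have int2 : ∀ i : Fin n, Integrable (fun y => fderiv ℝ (f i) y (b i) * Wp y) volume := by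
    intro i
    have : (fun y => fderiv ℝ (f i) y (b i) * Wp y)
        = fun y => (r * g2fun i (x + r • y)) * Wp y := by
      funext y; rw [hfderiv_eval]
    rw [this]
    exact int_helper (continuous_const.mul ((hg2C i).comp haffc)) hWpc hWps
  have int3 : ∀ i : Fin n, Integrable (fun y => f i y * Wp y) volume := fun i =>
    int_helper ((hfC1 i).continuous) hWpc hWps
  rw [key1, integral_finset_sum _ (fun i _ => int1 i)]
  have step : ∀ i : Fin n, ∫ y, f i y * fderiv ℝ Wp y (b i)
      = -∫ y, (r * g2fun i (x + r • y)) * Wp y := by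
    intro i
    rw [integral_mul_fderiv_eq_neg_fderiv_mul_of_integrable (int2 i) (int1 i) (int3 i)
      (fun z _ => (hfC1 i).differentiable one_ne_zero z) (fun z _ => hWpd z)]
    congr 1
    apply integral_congr_ae
    filter_upwards with y
    rw [hfderiv_eval]
  rw [Finset.sum_congr rfl (fun i _ => step i), Finset.sum_neg_distrib]
  congr 1
  have : ∀ i : Fin n, ∫ y, (r * g2fun i (x + r • y)) * Wp y
      = r * ∫ y, g2fun i (x + r • y) * Wp y := by
    intro i
    rw [← MeasureTheory.integral_const_mul]
    congr 1; funext y; ring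
  rw [Finset.sum_congr rfl (fun i _ => this i), ← Finset.mul_sum]
  congr 1
  have hlapW : (fun y => lap h (x + r • y) * Wp y)
      = fun y => ∑ i, g2fun i (x + r • y) * Wp y := by
    funext y; rw [← Finset.sum_mul]; rfl
  have intg2 : ∀ i : Fin n, Integrable (fun y => g2fun i (x + r • y) * Wp y) volume := by
    intro i
    have hc : Continuous fun y => g2fun i (x + r • y) := (hg2C i).comp haffc
    exact int_helper hc hWpc hWps
  rw [hlapW]
  exact (integral_finset_sum _ (fun i _ => intg2 i)).symm
/- ### differentiation under the integral sign -/
lemma param_hasDerivAt {n : ℕ} (h W : EuclideanSpace ℝ (Fin n) → ℝ)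
    (hh : ContDiff ℝ 1 h) (hWc : Continuous W) (hWs : HasCompactSupport W)
    (x : EuclideanSpace ℝ (Fin n)) (r : ℝ) :
    HasDerivAt (fun t : ℝ => ∫ y, h (x + t • y) * W y)
      (∫ y, fderiv ℝ h (x + r • y) y * W y) r := by
  have haffc : ∀ t : ℝ, Continuous (fun y : EuclideanSpace ℝ (Fin n) => x + t • y) :=
    fun t => continuous_const.add (continuous_id.const_smul t)
  have hder : ∀ (t : ℝ) (y : EuclideanSpace ℝ (Fin n)),
      HasDerivAt (fun s : ℝ => h (x + s • y) * W y)
        (fderiv ℝ h (x + t • y) y * W y) t := by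
    intro t y
    have h1 : HasDerivAt (fun s : ℝ => x + s • y) y t := by
      simpa using ((hasDerivAt_id t).smul_const y).const_add x
    have h2 : HasFDerivAt h (fderiv ℝ h (x + t • y)) (x + t • y) :=
      ((hh.differentiable one_ne_zero) _).hasFDerivAt
    exact (h2.comp_hasDerivAt t h1).mul_const (W y)
  have hjc : Continuous (fun p : ℝ × EuclideanSpace ℝ (Fin n) =>
      fderiv ℝ h (x + p.1 • p.2) p.2) := by
    have hfc : Continuous (fderiv ℝ h) := hh.continuous_fderiv one_ne_zero
    have ha : Continuous (fun p : ℝ × EuclideanSpace ℝ (Fin n) => x + p.1 • p.2) :=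
      continuous_const.add (continuous_fst.smul continuous_snd)
    exact (hfc.comp ha).clm_apply continuous_snd
  obtain ⟨M, hM⟩ :=
    ((isCompact_Icc (a := r - 1) (b := r + 1)).prod hWs).exists_bound_of_continuousOn
      hjc.continuousOn
  have hbound : ∀ᵐ y : EuclideanSpace ℝ (Fin n), ∀ t ∈ ball r 1,
      ‖fderiv ℝ h (x + t • y) y * W y‖ ≤ M * ‖W y‖ := by
    filter_upwards with y
    intro t ht
    by_cases hy : y ∈ tsupport W
    · have htmem : (t, y) ∈ Set.Icc (r - 1) (r + 1) ×ˢ tsupport W := by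
        refine ⟨?_, hy⟩
        simp only [Set.mem_Icc]
        have := abs_lt.1 (by simpa [Real.dist_eq] using mem_ball.1 ht)
        constructor <;> linarith
      have := hM (t, y) htmem
      rw [norm_mul]
      exact mul_le_mul_of_nonneg_right this (norm_nonneg _)
    · have : W y = 0 := image_eq_zero_of_notMem_tsupport hy
      simp [this]
  have hbi : Integrable (fun y : EuclideanSpace ℝ (Fin n) => M * ‖W y‖) volume := by
    apply Continuous.integrable_of_hasCompactSupport (continuous_const.mul hWc.norm)
    exact (hWs.norm).mul_left
  have hFint : Integrable (fun y : EuclideanSpace ℝ (Fin n) => h (x + r • y) * W y) volume :=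
    int_helper (hh.continuous.comp (haffc r)) hWc hWs
  have hF'meas : AEStronglyMeasurable
      (fun y : EuclideanSpace ℝ (Fin n) => fderiv ℝ h (x + r • y) y * W y) volume := by
    have : Continuous (fun y : EuclideanSpace ℝ (Fin n) => fderiv ℝ h (x + r • y) y) :=
      hjc.comp (continuous_const.prodMk continuous_id)
    exact (this.mul hWc).aestronglyMeasurable
  have main := hasDerivAt_integral_of_dominated_loc_of_deriv_le (μ := volume)
    (F := fun t (y : EuclideanSpace ℝ (Fin n)) => h (x + t • y) * W y)
    (F' := fun t (y : EuclideanSpace ℝ (Fin n)) => fderiv ℝ h (x + t • y) y * W y)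
    (x₀ := r) (s := ball r 1) (bound := fun y => M * ‖W y‖) (ball_mem_nhds r one_pos)
    (Filter.Eventually.of_forall fun t =>
      ((hh.continuous.comp (haffc t)).mul hWc).aestronglyMeasurable)
    hFint hF'meas hbound hbi
    (Filter.Eventually.of_forall fun y t _ => hder t y)
  exact main.2
set_option maxHeartbeats 2000000 in
/-- An entire biharmonic function with decay |u(x)| ≤ C(1+|x|)^{4−n}, n ≥ 5,
vanishes identically. -/
theorem biharmonic_decay_eq_zero (n : ℕ) (hn : 5 ≤ n)
    (u : EuclideanSpace ℝ (Fin n) → ℝ)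
    (hu : ContDiff ℝ 4 u) (hbih : ∀ x, biharm u x = 0)
    (C : ℝ) (hdecay : ∀ x, |u x| ≤ C * (1 + ‖x‖) ^ ((4 : ℝ) - (n : ℝ))) :
    ∀ x, u x = 0 := by
  intro x
  haveI : NeZero n := ⟨by omega⟩
  have hn5 : (5:ℝ) ≤ (n:ℝ) := by exact_mod_cast hn
  have hexp : ((4:ℝ) - n) ≤ 0 := by linarith
  -- smoothness of lap u
  have hvC2 : ContDiff ℝ 2 (lap u) := by
    rw [show lap u = fun z => ∑ i : Fin n,
        fderiv ℝ (fun y => fderiv ℝ u y (EuclideanSpace.single i 1)) z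
          (EuclideanSpace.single i 1) from rfl]
    have h1 : ContDiff ℝ 3 (fderiv ℝ u) := hu.fderiv_right (by norm_num)
    refine ContDiff.sum fun i _ => ?_
    have h2 : ContDiff ℝ 3 (fun y => fderiv ℝ u y (EuclideanSpace.single i 1)) :=
      h1.clm_apply contDiff_const
    have h3 : ContDiff ℝ 2
        (fderiv ℝ (fun y => fderiv ℝ u y (EuclideanSpace.single i 1))) :=
      h2.fderiv_right (by norm_num)
    exact h3.clm_apply contDiff_const
  have hlapv : ∀ z, lap (lap u) z = 0 := hbih
  set F : ℝ → ℝ := fun t => ∫ y, u (x + t • y) * wfun y with hF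
  set G : ℝ → ℝ := fun t => ∫ y, lap u (x + t • y) * Vfun y with hG
  have hF' : ∀ r, HasDerivAt F (-(r * G r)) r := by
    intro r
    have h1 := param_hasDerivAt u wfun (hu.of_le (by norm_num)) wfun_cont wfun_hcs x r
    rwa [green_step u (hu.of_le (by norm_num)) wfun Vfun wfun_cont wfun_hcs Vfun_diff
      Vfun_hcs Vfun_fderiv x r] at h1
  have hG' : ∀ r, HasDerivAt G 0 r := by
    intro r
    have h1 := param_hasDerivAt (lap u) Vfun (hvC2.of_le (by norm_num)) Vfun_cont Vfun_hcs x r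
    rw [green_step (lap u) hvC2 Vfun V2fun Vfun_cont Vfun_hcs V2fun_diff
      V2fun_hcs V2fun_fderiv x r] at h1
    have hz : ∫ y : EuclideanSpace ℝ (Fin n), lap (lap u) (x + r • y) * V2fun y = 0 := by
      simp only [hlapv, zero_mul, integral_zero]
    rw [hz] at h1
    simpa using h1
  have hGconst : ∀ r, G r = G 0 := fun r =>
    is_const_of_deriv_eq_zero (fun s => (hG' s).differentiableAt)
      (fun s => (hG' s).deriv) r 0
  set c0 := G 0 with hc0def
  have hF'2 : ∀ r, HasDerivAt F (-(r * c0)) r := by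
    intro r
    have := hF' r
    rwa [hGconst r] at this
  have hphi : ∀ r : ℝ, F r + c0/2 * r^2 = F 0 + c0/2 * 0^2 := by
    intro r
    have hd : ∀ s : ℝ, HasDerivAt (fun t : ℝ => F t + c0/2 * t^2)
        (-(s*c0) + c0/2 * (2 * s^1)) s := fun s =>
      (hF'2 s).add ((hasDerivAt_pow 2 s).const_mul (c0/2))
    exact is_const_of_deriv_eq_zero (fun s => (hd s).differentiableAt)
      (fun s => by rw [(hd s).deriv]; ring) r 0
  have hFr : ∀ r, F r = F 0 - c0/2 * r^2 := by
    intro r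
    have := hphi r
    nlinarith [this]
  -- decay of F at infinity
  have hC0 : 0 ≤ C := by
    have h1 := hdecay 0
    have h2 : (0:ℝ) < (1 + ‖(0 : EuclideanSpace ℝ (Fin n))‖) ^ ((4:ℝ) - n) :=
      Real.rpow_pos_of_pos (by positivity) _
    nlinarith [abs_nonneg (u 0)]
  have hFlim : Tendsto F atTop (𝓝 0) := by
    have hae : ∀ᵐ y : EuclideanSpace ℝ (Fin n), y ≠ 0 := by
      rw [ae_iff]
      have hset : {y : EuclideanSpace ℝ (Fin n) | ¬ y ≠ 0} = {0} := by ext y; simp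
      rw [hset]
      exact measure_singleton 0
    have hlim : ∀ᵐ y : EuclideanSpace ℝ (Fin n), Tendsto
        (fun t : ℝ => u (x + t • y) * wfun y) atTop (𝓝 0) := by
      filter_upwards [hae] with y hy
      have hny : 0 < ‖y‖ := norm_pos_iff.2 hy
      have hnorm : Tendsto (fun t : ℝ => ‖x + t • y‖) atTop atTop := by
        have hfle : (fun t : ℝ => t * ‖y‖ - ‖x‖) ≤ᶠ[atTop] fun t : ℝ => ‖x + t • y‖ := by
          filter_upwards with t
          have h1 : ‖t • y‖ ≤ ‖x + t • y‖ + ‖x‖ := by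
            have := norm_sub_le (x + t • y) x
            simpa [add_sub_cancel_left] using this
          have h2 : t * ‖y‖ ≤ ‖t • y‖ := by
            rw [norm_smul, Real.norm_eq_abs]
            exact mul_le_mul_of_nonneg_right (le_abs_self t) (norm_nonneg y)
          linarith
        have hft : Tendsto (fun t : ℝ => t * ‖y‖ - ‖x‖) atTop atTop := by
          have h3 : Tendsto (fun t : ℝ => t * ‖y‖) atTop atTop :=
            tendsto_id.atTop_mul_const hny
          simpa [sub_eq_add_neg] using tendsto_atTop_add_const_right atTop (-‖x‖) h3
        exact tendsto_atTop_mono' atTop hfle hft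
      have hpow : Tendsto (fun t : ℝ => C * (1 + ‖x + t • y‖) ^ ((4:ℝ) - n))
          atTop (𝓝 0) := by
        have hbase : Tendsto (fun t : ℝ => 1 + ‖x + t • y‖) atTop atTop :=
          tendsto_atTop_add_const_left _ 1 hnorm
        have hr : Tendsto (fun s : ℝ => s ^ ((4:ℝ) - n)) atTop (𝓝 0) := by
          have := tendsto_rpow_neg_atTop (y := (n:ℝ) - 4) (by linarith)
          simpa [neg_sub] using this
        have := (hr.comp hbase).const_mul C
        simpa using this
      have hu0 : Tendsto (fun t : ℝ => u (x + t • y)) atTop (𝓝 0) :=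
        squeeze_zero_norm (fun t => by rw [Real.norm_eq_abs]; exact hdecay _) hpow
      simpa using hu0.mul_const (wfun y)
    have hbound : ∀ᶠ t : ℝ in atTop, ∀ᵐ y : EuclideanSpace ℝ (Fin n),
        ‖u (x + t • y) * wfun y‖ ≤ C * ‖wfun y‖ := by
      filter_upwards with t
      filter_upwards with y
      rw [norm_mul]
      apply mul_le_mul_of_nonneg_right _ (norm_nonneg _)
      rw [Real.norm_eq_abs]
      calc |u (x + t • y)| ≤ C * (1 + ‖x + t • y‖) ^ ((4:ℝ) - n) := hdecay _
        _ ≤ C * 1 := mul_le_mul_of_nonneg_left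
            (Real.rpow_le_one_of_one_le_of_nonpos
              (by linarith [norm_nonneg (x + t • y)]) hexp) hC0
        _ = C := mul_one C
    have hbi : Integrable (fun y : EuclideanSpace ℝ (Fin n) => C * ‖wfun y‖) volume := by
      apply Continuous.integrable_of_hasCompactSupport (continuous_const.mul wfun_cont.norm)
      exact (wfun_hcs.norm).mul_left
    have haffc : ∀ t : ℝ, Continuous (fun y : EuclideanSpace ℝ (Fin n) => x + t • y) :=
      fun t => continuous_const.add (continuous_id.const_smul t)
    have hmeas : ∀ᶠ t : ℝ in atTop, AEStronglyMeasurable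
        (fun y : EuclideanSpace ℝ (Fin n) => u (x + t • y) * wfun y) volume := by
      filter_upwards with t
      exact ((hu.continuous.comp (haffc t)).mul wfun_cont).aestronglyMeasurable
    have hdom := MeasureTheory.tendsto_integral_filter_of_dominated_convergence
      (μ := volume) (l := atTop)
      (F := fun (t : ℝ) (y : EuclideanSpace ℝ (Fin n)) => u (x + t • y) * wfun y)
      (f := fun _ => (0:ℝ)) (fun y => C * ‖wfun y‖) hmeas hbound hbi hlim
    simpa using hdom
  -- conclude c0 = 0 and F 0 = 0
  have h2 : Tendsto (fun r : ℝ => F r / r^2) atTop (𝓝 0) :=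
    hFlim.div_atTop (tendsto_pow_atTop two_ne_zero)
  have h3 : Tendsto (fun r : ℝ => F 0 / r^2 - c0/2) atTop (𝓝 (0 - c0/2)) :=
    (tendsto_const_nhds.div_atTop (tendsto_pow_atTop two_ne_zero)).sub tendsto_const_nhds
  have heq : ∀ᶠ r : ℝ in atTop, F r / r^2 = F 0 / r^2 - c0/2 := by
    filter_upwards [eventually_gt_atTop (0:ℝ)] with r hr
    rw [hFr r]
    field_simp
  have huniq : (0:ℝ) = 0 - c0/2 := tendsto_nhds_unique (h2.congr' heq) h3
  have hc0 : c0 = 0 := by linarith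
  have hFconst : Tendsto F atTop (𝓝 (F 0)) := by
    have hFF : F = fun _ => F 0 := funext fun r => by rw [hFr r, hc0]; ring
    rw [hFF]
    exact tendsto_const_nhds
  have hF00 : F 0 = 0 := tendsto_nhds_unique hFconst hFlim
  have hF0val : F 0 = u x * ∫ y : EuclideanSpace ℝ (Fin n), wfun y := by
    have h00 : F 0 = ∫ y : EuclideanSpace ℝ (Fin n), u x * wfun y := by
      rw [hF]
      show (∫ y : EuclideanSpace ℝ (Fin n), u (x + (0:ℝ) • y) * wfun y)
        = ∫ y : EuclideanSpace ℝ (Fin n), u x * wfun y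
      congr 1
      funext y
      norm_num
    rw [h00]
    exact MeasureTheory.integral_const_mul _ _
  have hw := wfun_integral_pos (n := n)
  rw [hF0val] at hF00
  exact (mul_eq_zero.1 hF00).resolve_right (ne_of_gt hw)
end

section
/- Giraud's lemma, critical case: under the hypotheses of the previous statement but with a + b = n, the composed kernel satisfies |K(x,y)| ≤ C(1 + |log|x−y||) for all x ≠ y in the bounded set Ω. -/
open MeasureTheory Filter

section GiraudHelpers

open MeasureTheory Metric Set Filter

variable {n : ℕ}

local notation "E" => EuclideanSpace ℝ (Fin n)

private lemma shell_bound (x : E) {S : Set E} {t : ℝ} (hS : S ⊆ ball x t)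
    {c : ℝ} {f : E → ENNReal} (hf : ∀ z ∈ S, f z ≤ ENNReal.ofReal c) :
    ∫⁻ z in S, f z ≤ ENNReal.ofReal c * volume (ball x t) := by
  calc ∫⁻ z in S, f z ≤ ∫⁻ _ in S, ENNReal.ofReal c := setLIntegral_mono measurable_const hf
    _ = ENNReal.ofReal c * volume S := setLIntegral_const S _
    _ ≤ ENNReal.ofReal c * volume (ball x t) := mul_le_mul_right (measure_mono hS) _

/-- Lemma A: the ball integral of `‖z - x‖ ^ (-a)`. -/
private lemma lemA (hn : 0 < n) {a : ℝ} (ha : 0 < a) (han : a < n) :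
    ∃ κ : ENNReal, κ ≠ ⊤ ∧ ∀ (x : E) (ρ : ℝ), 0 < ρ →
      ∫⁻ z in ball x ρ, ENNReal.ofReal (‖z - x‖ ^ (-a)) ≤ ENNReal.ofReal (ρ ^ ((n : ℝ) - a)) * κ := by
  haveI : Nonempty (Fin n) := ⟨⟨0, hn⟩⟩
  haveI : Nontrivial (EuclideanSpace ℝ (Fin n)) := inferInstance
  set q : ℝ := (2 : ℝ) ^ (a - (n : ℝ)) with hq
  have hq0 : 0 < q := Real.rpow_pos_of_pos two_pos _
  have hq1 : q < 1 := Real.rpow_lt_one_of_one_lt_of_neg one_lt_two (by push_cast; linarith)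
  have hq1' : ENNReal.ofReal q < 1 := ENNReal.ofReal_lt_one.2 hq1
  refine ⟨ENNReal.ofReal ((2 : ℝ) ^ a) * (1 - ENNReal.ofReal q)⁻¹ * volume (ball (0 : E) 1),
    ?_, ?_⟩
  · exact ENNReal.mul_ne_top (ENNReal.mul_ne_top ENNReal.ofReal_ne_top
      (by rw [ENNReal.inv_ne_top]; exact (tsub_pos_of_lt hq1').ne')) (measure_ball_lt_top).ne
  intro x ρ hρ
  set sh : ℕ → Set E := fun k =>
    {z : E | ρ * (2 : ℝ) ^ (-(k : ℝ) - 1) ≤ ‖z - x‖ ∧ ‖z - x‖ < ρ * (2 : ℝ) ^ (-(k : ℝ))} with hsh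
  have hcover : ball x ρ ⊆ {x} ∪ ⋃ k, sh k := by
    intro z hz
    rcases eq_or_ne z x with rfl | hzx
    · exact Or.inl rfl
    refine Or.inr (mem_iUnion.2 ?_)
    have ht0 : 0 < ‖z - x‖ := by rw [norm_pos_iff, sub_ne_zero]; exact hzx
    have htρ : ‖z - x‖ < ρ := by rw [mem_ball, dist_eq_norm] at hz; exact hz
    have htr1 : ‖z - x‖ / ρ < 1 := (div_lt_one hρ).2 htρ
    have htr0 : 0 < ‖z - x‖ / ρ := div_pos ht0 hρ
    set L : ℝ := -Real.logb 2 (‖z - x‖ / ρ) with hL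
    have hL0 : 0 < L := by
      rw [hL, neg_pos]; exact Real.logb_neg one_lt_two htr0 htr1
    have hrepr : ‖z - x‖ / ρ = (2 : ℝ) ^ (-L) := by
      rw [hL, neg_neg, Real.rpow_logb two_pos (by norm_num) htr0]
    have hc1 : 1 ≤ ⌈L⌉₊ := Nat.one_le_ceil_iff.2 hL0
    have h2 : ((⌈L⌉₊ - 1 : ℕ) : ℝ) = (⌈L⌉₊ : ℝ) - 1 := by
      rw [Nat.cast_sub hc1]; norm_num
    refine ⟨⌈L⌉₊ - 1, ?_, ?_⟩
    · have key : (2 : ℝ) ^ (-((⌈L⌉₊ - 1 : ℕ) : ℝ) - 1) ≤ ‖z - x‖ / ρ := by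
        rw [h2, hrepr]
        apply (Real.rpow_le_rpow_left_iff (x := (2:ℝ)) one_lt_two).2
        have h1 : L ≤ (⌈L⌉₊ : ℝ) := Nat.le_ceil L
        linarith
      show ρ * (2:ℝ) ^ (-((⌈L⌉₊ - 1 : ℕ) : ℝ) - 1) ≤ ‖z - x‖
      rw [mul_comm]; exact (le_div_iff₀ hρ).1 key
    · have key : ‖z - x‖ / ρ < (2 : ℝ) ^ (-((⌈L⌉₊ - 1 : ℕ) : ℝ)) := by
        rw [h2, hrepr]
        apply (Real.rpow_lt_rpow_left_iff (x := (2:ℝ)) one_lt_two).2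
        have h1 : (⌈L⌉₊ : ℝ) < L + 1 := Nat.ceil_lt_add_one hL0.le
        linarith
      show ‖z - x‖ < ρ * (2:ℝ) ^ (-((⌈L⌉₊ - 1 : ℕ) : ℝ))
      rw [mul_comm]; exact (div_lt_iff₀ hρ).1 key
  
  have hreal : ∀ k : ℕ, (ρ * (2:ℝ) ^ (-(k:ℝ) - 1)) ^ (-a) * (ρ * (2:ℝ) ^ (-(k:ℝ))) ^ (n:ℕ)
      = ρ ^ ((n:ℝ) - a) * ((2:ℝ) ^ a * q ^ k) := by
    intro k
    have h1 : (0:ℝ) < (2:ℝ) ^ (-(k:ℝ) - 1) := Real.rpow_pos_of_pos two_pos _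
    have h2 : (0:ℝ) < (2:ℝ) ^ (-(k:ℝ)) := Real.rpow_pos_of_pos two_pos _
    rw [hq, ← Real.rpow_natCast (ρ * (2:ℝ) ^ (-(k:ℝ))) n, Real.mul_rpow hρ.le h1.le,
      Real.mul_rpow hρ.le h2.le, ← Real.rpow_natCast ((2:ℝ) ^ (a - (n:ℝ))) k,
      ← Real.rpow_mul (by norm_num : (0:ℝ) ≤ 2), ← Real.rpow_mul (by norm_num : (0:ℝ) ≤ 2),
      ← Real.rpow_mul (by norm_num : (0:ℝ) ≤ 2)]
    calc ρ ^ (-a) * (2:ℝ) ^ ((-(k:ℝ) - 1) * (-a)) * (ρ ^ ((n:ℕ):ℝ) * (2:ℝ) ^ (-(k:ℝ) * ((n:ℕ):ℝ)))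
        = (ρ ^ (-a) * ρ ^ ((n:ℕ):ℝ)) * ((2:ℝ) ^ ((-(k:ℝ) - 1) * (-a)) * (2:ℝ) ^ (-(k:ℝ) * ((n:ℕ):ℝ))) := by
          ring
      _ = ρ ^ (-a + (n:ℝ)) * (2:ℝ) ^ ((-(k:ℝ) - 1) * (-a) + -(k:ℝ) * ((n:ℕ):ℝ)) := by
          rw [← Real.rpow_add hρ, ← Real.rpow_add two_pos]
      _ = ρ ^ ((n:ℝ) - a) * (2:ℝ) ^ (a + (a - (n:ℝ)) * (k:ℝ)) := by
          congr 1
          · congr 1; ring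
          · congr 1; ring
      _ = ρ ^ ((n:ℝ) - a) * ((2:ℝ) ^ a * (2:ℝ) ^ ((a - (n:ℝ)) * (k:ℝ))) := by
          rw [Real.rpow_add two_pos]
  have hterm : ∀ k : ℕ, ∫⁻ z in sh k, ENNReal.ofReal (‖z - x‖ ^ (-a))
      ≤ (ENNReal.ofReal (ρ ^ ((n:ℝ) - a)) * ENNReal.ofReal ((2:ℝ) ^ a))
          * ((ENNReal.ofReal q) ^ k * volume (ball (0 : E) 1)) := by
    intro k
    have h1 : (0:ℝ) < ρ * (2:ℝ) ^ (-(k:ℝ) - 1) := mul_pos hρ (Real.rpow_pos_of_pos two_pos _)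
    have h2 : (0:ℝ) < ρ * (2:ℝ) ^ (-(k:ℝ)) := mul_pos hρ (Real.rpow_pos_of_pos two_pos _)
    have hball : sh k ⊆ ball x (ρ * (2:ℝ) ^ (-(k:ℝ))) := by
      intro z hz; rw [mem_ball, dist_eq_norm]; exact hz.2
    have hb := shell_bound (f := fun z => ENNReal.ofReal (‖z - x‖ ^ (-a))) x hball
      (c := (ρ * (2:ℝ) ^ (-(k:ℝ) - 1)) ^ (-a)) ?_
    · refine hb.trans ?_
      rw [Measure.addHaar_ball volume x h2.le, finrank_euclideanSpace_fin, ← mul_assoc,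
        ← ENNReal.ofReal_mul (Real.rpow_nonneg h1.le _), hreal k,
        ENNReal.ofReal_mul (Real.rpow_nonneg hρ.le _),
        ENNReal.ofReal_mul (Real.rpow_nonneg (by norm_num : (0:ℝ) ≤ 2) _),
        ENNReal.ofReal_pow hq0.le]
      ring_nf
      exact le_rfl
    · intro z hz
      apply ENNReal.ofReal_le_ofReal
      exact Real.rpow_le_rpow_of_nonpos h1 hz.1 (neg_nonpos.2 ha.le)
  calc ∫⁻ z in ball x ρ, ENNReal.ofReal (‖z - x‖ ^ (-a))
      ≤ ∫⁻ z in {x} ∪ ⋃ k, sh k, ENNReal.ofReal (‖z - x‖ ^ (-a)) := lintegral_mono_set hcover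
    _ ≤ (∫⁻ z in ({x} : Set E), ENNReal.ofReal (‖z - x‖ ^ (-a)))
        + ∫⁻ z in ⋃ k, sh k, ENNReal.ofReal (‖z - x‖ ^ (-a)) := lintegral_union_le _ _ _
    _ = ∫⁻ z in ⋃ k, sh k, ENNReal.ofReal (‖z - x‖ ^ (-a)) := by
        rw [setLIntegral_measure_zero _ _ (measure_singleton x), zero_add]
    _ ≤ ∑' k, ∫⁻ z in sh k, ENNReal.ofReal (‖z - x‖ ^ (-a)) := lintegral_iUnion_le _ _
    _ ≤ ∑' k, (ENNReal.ofReal (ρ ^ ((n:ℝ) - a)) * ENNReal.ofReal ((2:ℝ) ^ a))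
          * ((ENNReal.ofReal q) ^ k * volume (ball (0 : E) 1)) :=
        ENNReal.tsum_le_tsum hterm
    _ = (ENNReal.ofReal (ρ ^ ((n:ℝ) - a)) * ENNReal.ofReal ((2:ℝ) ^ a))
          * ((∑' k, (ENNReal.ofReal q) ^ k) * volume (ball (0 : E) 1)) := by
        rw [ENNReal.tsum_mul_left, ENNReal.tsum_mul_right]
    _ = ENNReal.ofReal (ρ ^ ((n:ℝ) - a))
          * (ENNReal.ofReal ((2:ℝ) ^ a) * (1 - ENNReal.ofReal q)⁻¹ * volume (ball (0 : E) 1)) := by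
        rw [ENNReal.tsum_geometric]; ring

/-- Lemma B: the annulus integral of `‖z - x‖ ^ (-n)` is logarithmic. -/
private lemma lemB (hn : 0 < n) : ∃ κ : ENNReal, κ ≠ ⊤ ∧ ∀ (x : E) (r R : ℝ), 0 < r → r ≤ R →
    ∫⁻ z in {z : E | r ≤ ‖z - x‖ ∧ ‖z - x‖ ≤ R}, ENNReal.ofReal (‖z - x‖ ^ (-(n:ℝ)))
      ≤ κ * ENNReal.ofReal (1 + Real.log (R / r)) := by
  haveI : Nonempty (Fin n) := ⟨⟨0, hn⟩⟩
  haveI : Nontrivial (EuclideanSpace ℝ (Fin n)) := inferInstance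
  have hlog2 : (0:ℝ) < Real.log 2 := Real.log_pos one_lt_two
  refine ⟨ENNReal.ofReal (1 / Real.log 2 + 1) * (ENNReal.ofReal ((2:ℝ) ^ ((n:ℕ):ℝ))
      * volume (ball (0 : E) 1)), ?_, ?_⟩
  · exact ENNReal.mul_ne_top ENNReal.ofReal_ne_top
      (ENNReal.mul_ne_top ENNReal.ofReal_ne_top measure_ball_lt_top.ne)
  intro x r R hr hrR
  have hR : 0 < R := hr.trans_le hrR
  have hRr1 : 1 ≤ R / r := (one_le_div hr).2 hrR
  have hlogRr : 0 ≤ Real.log (R / r) := Real.log_nonneg hRr1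
  set sh : ℕ → Set E := fun k =>
    {z : E | (r * (2:ℝ) ^ ((k:ℝ)) ≤ ‖z - x‖ ∧ ‖z - x‖ < r * (2:ℝ) ^ ((k:ℝ) + 1)) ∧ ‖z - x‖ ≤ R}
    with hsh
  set N : ℕ := ⌊Real.logb 2 (R / r)⌋₊ + 1 with hN
  -- coverage
  have hcover : {z : E | r ≤ ‖z - x‖ ∧ ‖z - x‖ ≤ R} ⊆ ⋃ k, sh k := by
    rintro z ⟨hz1, hz2⟩
    have ht0 : 0 < ‖z - x‖ := hr.trans_le hz1
    have htr1 : 1 ≤ ‖z - x‖ / r := (one_le_div hr).2 hz1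
    have htr0 : 0 < ‖z - x‖ / r := lt_of_lt_of_le one_pos htr1
    set L : ℝ := Real.logb 2 (‖z - x‖ / r) with hL
    have hL0 : 0 ≤ L := Real.logb_nonneg one_lt_two htr1
    have hrepr : ‖z - x‖ / r = (2:ℝ) ^ L := (Real.rpow_logb two_pos (by norm_num) htr0).symm
    refine mem_iUnion.2 ⟨⌊L⌋₊, ⟨⟨?_, ?_⟩, hz2⟩⟩
    · have key : (2:ℝ) ^ ((⌊L⌋₊ : ℝ)) ≤ ‖z - x‖ / r := by
        rw [hrepr]
        exact (Real.rpow_le_rpow_left_iff one_lt_two).2 (Nat.floor_le hL0)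
      rw [mul_comm]; exact (le_div_iff₀ hr).1 key
    · have key : ‖z - x‖ / r < (2:ℝ) ^ ((⌊L⌋₊ : ℝ) + 1) := by
        rw [hrepr]
        exact (Real.rpow_lt_rpow_left_iff one_lt_two).2 (Nat.lt_floor_add_one L)
      rw [mul_comm]; exact (div_lt_iff₀ hr).1 key
  -- shells vanish for large k
  have hempty : ∀ k, N ≤ k → sh k = ∅ := by
    intro k hk
    ext z; simp only [hsh, mem_setOf_eq, mem_empty_iff_false, iff_false]
    rintro ⟨⟨h1, _⟩, h2⟩
    have h3 : (2:ℝ) ^ ((k:ℝ)) ≤ R / r := by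
      rw [le_div_iff₀ hr]
      calc (2:ℝ) ^ ((k:ℝ)) * r = r * (2:ℝ) ^ ((k:ℝ)) := mul_comm _ _
        _ ≤ ‖z - x‖ := h1
        _ ≤ R := h2
    have h4 : ((k:ℝ)) ≤ Real.logb 2 (R / r) := by
      apply (Real.rpow_le_rpow_left_iff one_lt_two).1
      rw [Real.rpow_logb two_pos (by norm_num) (lt_of_lt_of_le one_pos hRr1)]
      exact h3
    have h5 : k ≤ ⌊Real.logb 2 (R / r)⌋₊ := Nat.le_floor (by exact_mod_cast h4)
    omega
  -- per-shell bound
  have hterm : ∀ k : ℕ, ∫⁻ z in sh k, ENNReal.ofReal (‖z - x‖ ^ (-(n:ℝ)))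
      ≤ ENNReal.ofReal ((2:ℝ) ^ ((n:ℕ):ℝ)) * volume (ball (0 : E) 1) := by
    intro k
    have h1 : (0:ℝ) < r * (2:ℝ) ^ ((k:ℝ)) := mul_pos hr (Real.rpow_pos_of_pos two_pos _)
    have h2 : (0:ℝ) < r * (2:ℝ) ^ ((k:ℝ) + 1) := mul_pos hr (Real.rpow_pos_of_pos two_pos _)
    have hball : sh k ⊆ ball x (r * (2:ℝ) ^ ((k:ℝ) + 1)) := by
      intro z hz; rw [mem_ball, dist_eq_norm]; exact hz.1.2
    have hb := shell_bound (f := fun z => ENNReal.ofReal (‖z - x‖ ^ (-(n:ℝ)))) x hball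
      (c := (r * (2:ℝ) ^ ((k:ℝ))) ^ (-(n:ℝ)))
      (fun z hz => ENNReal.ofReal_le_ofReal
        (Real.rpow_le_rpow_of_nonpos h1 hz.1.1 (neg_nonpos.2 (Nat.cast_nonneg n))))
    refine hb.trans ?_
    rw [Measure.addHaar_ball volume x h2.le, finrank_euclideanSpace_fin, ← mul_assoc,
      ← ENNReal.ofReal_mul (Real.rpow_nonneg h1.le _)]
    refine mul_le_mul_left (ENNReal.ofReal_le_ofReal (le_of_eq ?_)) _
    rw [← Real.rpow_natCast (r * (2:ℝ) ^ ((k:ℝ) + 1)) n,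
      Real.mul_rpow hr.le (Real.rpow_pos_of_pos two_pos _).le,
      Real.mul_rpow hr.le (Real.rpow_pos_of_pos two_pos _).le,
      ← Real.rpow_mul (by norm_num : (0:ℝ) ≤ 2), ← Real.rpow_mul (by norm_num : (0:ℝ) ≤ 2)]
    calc r ^ (-((n:ℕ):ℝ)) * (2:ℝ) ^ ((k:ℝ) * -((n:ℕ):ℝ)) * (r ^ ((n:ℕ):ℝ) * (2:ℝ) ^ (((k:ℝ) + 1) * ((n:ℕ):ℝ)))
        = (r ^ (-((n:ℕ):ℝ)) * r ^ ((n:ℕ):ℝ)) * ((2:ℝ) ^ ((k:ℝ) * -((n:ℕ):ℝ)) * (2:ℝ) ^ (((k:ℝ) + 1) * ((n:ℕ):ℝ))) := by ring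
      _ = r ^ (-((n:ℕ):ℝ) + ((n:ℕ):ℝ)) * (2:ℝ) ^ ((k:ℝ) * -((n:ℕ):ℝ) + ((k:ℝ) + 1) * ((n:ℕ):ℝ)) := by
          rw [← Real.rpow_add hr, ← Real.rpow_add two_pos]
      _ = (2:ℝ) ^ (((n:ℕ):ℝ)) := by
          rw [show -((n:ℕ):ℝ) + ((n:ℕ):ℝ) = 0 by ring, Real.rpow_zero, one_mul]
          congr 1; ring
  -- assemble
  calc ∫⁻ z in {z : E | r ≤ ‖z - x‖ ∧ ‖z - x‖ ≤ R}, ENNReal.ofReal (‖z - x‖ ^ (-(n:ℝ)))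
      ≤ ∫⁻ z in ⋃ k, sh k, ENNReal.ofReal (‖z - x‖ ^ (-(n:ℝ))) := lintegral_mono_set hcover
    _ ≤ ∑' k, ∫⁻ z in sh k, ENNReal.ofReal (‖z - x‖ ^ (-(n:ℝ))) := lintegral_iUnion_le _ _
    _ = ∑ k ∈ Finset.range N, ∫⁻ z in sh k, ENNReal.ofReal (‖z - x‖ ^ (-(n:ℝ))) := by
        apply tsum_eq_sum
        intro k hk
        rw [hempty k (by simpa [Finset.mem_range, not_lt] using hk), Measure.restrict_empty,
          lintegral_zero_measure]
    _ ≤ ∑ k ∈ Finset.range N, ENNReal.ofReal ((2:ℝ) ^ ((n:ℕ):ℝ)) * volume (ball (0 : E) 1) :=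
        Finset.sum_le_sum (fun k _ => hterm k)
    _ = (N : ENNReal) * (ENNReal.ofReal ((2:ℝ) ^ ((n:ℕ):ℝ)) * volume (ball (0 : E) 1)) := by
        rw [Finset.sum_const, Finset.card_range, nsmul_eq_mul]
    _ ≤ ENNReal.ofReal (1 / Real.log 2 + 1) * (ENNReal.ofReal ((2:ℝ) ^ ((n:ℕ):ℝ))
          * volume (ball (0 : E) 1)) * ENNReal.ofReal (1 + Real.log (R / r)) := by
        have hNle : (N : ℝ) ≤ (1 / Real.log 2 + 1) * (1 + Real.log (R / r)) := by
          have h1 : (N : ℝ) ≤ Real.logb 2 (R / r) + 1 := by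
            rw [hN]; push_cast
            have := Nat.floor_le (Real.logb_nonneg one_lt_two hRr1)
            linarith
          have h2 : Real.logb 2 (R / r) = Real.log (R / r) / Real.log 2 := by simp [Real.logb]
          have h3 : (0:ℝ) ≤ (1 / Real.log 2) * Real.log (R / r) := by positivity
          have h4 : (1 / Real.log 2 + 1) * (1 + Real.log (R / r))
              = 1 / Real.log 2 + 1 + (1 / Real.log 2) * Real.log (R / r) + Real.log (R / r) := by
            ring
          have h5 : Real.log (R / r) / Real.log 2 = (1 / Real.log 2) * Real.log (R / r) := by ring
          rw [h2, h5] at h1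
          have h6 : (0:ℝ) ≤ 1 / Real.log 2 := by positivity
          linarith
        calc (N : ENNReal) * (ENNReal.ofReal ((2:ℝ) ^ ((n:ℕ):ℝ)) * volume (ball (0 : E) 1))
            ≤ ENNReal.ofReal ((1 / Real.log 2 + 1) * (1 + Real.log (R / r)))
              * (ENNReal.ofReal ((2:ℝ) ^ ((n:ℕ):ℝ)) * volume (ball (0 : E) 1)) := by
              refine mul_le_mul_left ?_ _
              rw [← ENNReal.ofReal_natCast]
              exact ENNReal.ofReal_le_ofReal hNle
          _ = _ := by
              rw [ENNReal.ofReal_mul (by positivity)]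
              ring

set_option maxHeartbeats 1000000 in
private theorem giraud_core (n : ℕ) (Ω : Set (EuclideanSpace ℝ (Fin n)))
    (hΩb : Bornology.IsBounded Ω)
    (a b : ℝ) (ha : 0 < a) (han : a < n) (hb : 0 < b) (hbn : b < n)
    (hab : a + b = (n : ℝ)) (hn : 0 < n)
    (κa κb κB : ENNReal) (hκa : κa ≠ ⊤) (hκb : κb ≠ ⊤) (hκB : κB ≠ ⊤)
    (hA_a : ∀ (x : EuclideanSpace ℝ (Fin n)) (ρ : ℝ), 0 < ρ →
      ∫⁻ z in ball x ρ, ENNReal.ofReal (‖z - x‖ ^ (-a)) ≤ ENNReal.ofReal (ρ ^ ((n : ℝ) - a)) * κa)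
    (hA_b : ∀ (x : EuclideanSpace ℝ (Fin n)) (ρ : ℝ), 0 < ρ →
      ∫⁻ z in ball x ρ, ENNReal.ofReal (‖z - x‖ ^ (-b)) ≤ ENNReal.ofReal (ρ ^ ((n : ℝ) - b)) * κb)
    (hB : ∀ (x : EuclideanSpace ℝ (Fin n)) (r R : ℝ), 0 < r → r ≤ R →
      ∫⁻ z in {z : EuclideanSpace ℝ (Fin n) | r ≤ ‖z - x‖ ∧ ‖z - x‖ ≤ R},
        ENNReal.ofReal (‖z - x‖ ^ (-(n:ℝ))) ≤ κB * ENNReal.ofReal (1 + Real.log (R / r)))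
    {x y : EuclideanSpace ℝ (Fin n)} (hx : x ∈ Ω) (hy : y ∈ Ω) (hxy : x ≠ y) :
    ∫⁻ z in Ω, ENNReal.ofReal (‖x - z‖ ^ (-a) * ‖z - y‖ ^ (-b))
      ≤ ENNReal.ofReal (((2:ℝ) ^ b * κa.toReal + (2:ℝ) ^ a * κb.toReal
          + 2 * (κB.toReal * (1 + Real.log (max (Metric.diam Ω) 1))))
        * (1 + |Real.log ‖x - y‖|)) := by
  set R : ℝ := max (Metric.diam Ω) 1 with hRdef
  have hR1 : (1:ℝ) ≤ R := le_max_right _ _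
  have hR0 : (0:ℝ) < R := lt_of_lt_of_le one_pos hR1
  have hlogR : 0 ≤ Real.log R := Real.log_nonneg hR1
  set r : ℝ := ‖x - y‖ with hrdef
  have hr : 0 < r := by rw [hrdef, norm_pos_iff, sub_ne_zero]; exact hxy
  have hrR : r ≤ R := by
    rw [hrdef, ← dist_eq_norm]
    exact (Metric.dist_le_diam_of_mem hΩb hx hy).trans (le_max_left _ _)
  have habs : 0 ≤ 1 + |Real.log r| := by positivity
  have h1abs : (1:ℝ) ≤ 1 + |Real.log r| := by
    have := abs_nonneg (Real.log r); linarith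
  set Ka := κa.toReal with hKa
  set Kb := κb.toReal with hKb
  set KB := κB.toReal with hKB
  have hKa0 : 0 ≤ Ka := ENNReal.toReal_nonneg
  have hKb0 : 0 ≤ Kb := ENNReal.toReal_nonneg
  have hKB0 : 0 ≤ KB := ENNReal.toReal_nonneg
  have hκa' : κa = ENNReal.ofReal Ka := (ENNReal.ofReal_toReal hκa).symm
  have hκb' : κb = ENNReal.ofReal Kb := (ENNReal.ofReal_toReal hκb).symm
  have hκB' : κB = ENNReal.ofReal KB := (ENNReal.ofReal_toReal hκB).symm
  -- the four pieces
  set A1 : Set (EuclideanSpace ℝ (Fin n)) := {z | ‖x - z‖ ≤ ‖z - y‖} ∩ ball x r with hA1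
  set A2 : Set (EuclideanSpace ℝ (Fin n)) :=
    {z | ‖x - z‖ ≤ ‖z - y‖} ∩ {z | r ≤ ‖z - x‖ ∧ ‖z - x‖ ≤ R} with hA2
  set B1 : Set (EuclideanSpace ℝ (Fin n)) := {z | ‖z - y‖ ≤ ‖x - z‖} ∩ ball y r with hB1
  set B2 : Set (EuclideanSpace ℝ (Fin n)) :=
    {z | ‖z - y‖ ≤ ‖x - z‖} ∩ {z | r ≤ ‖z - y‖ ∧ ‖z - y‖ ≤ R} with hB2
  have hcover : Ω ⊆ (A1 ∪ A2) ∪ (B1 ∪ B2) := by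
    intro z hz
    have hzx : ‖z - x‖ ≤ R := by
      rw [norm_sub_rev, ← dist_eq_norm]
      exact (Metric.dist_le_diam_of_mem hΩb hx hz).trans (le_max_left _ _)
    have hzy : ‖z - y‖ ≤ R := by
      rw [← dist_eq_norm]
      refine le_trans ?_ (le_max_left _ _)
      rw [dist_comm]; exact Metric.dist_le_diam_of_mem hΩb hy hz
    rcases le_total ‖x - z‖ ‖z - y‖ with hcmp | hcmp
    · rcases lt_or_ge ‖z - x‖ r with hlt | hge
      · exact Or.inl (Or.inl ⟨hcmp, by rwa [mem_ball, dist_eq_norm]⟩)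
      · exact Or.inl (Or.inr ⟨hcmp, hge, hzx⟩)
    · rcases lt_or_ge ‖z - y‖ r with hlt | hge
      · exact Or.inr (Or.inl ⟨hcmp, by rwa [mem_ball, dist_eq_norm]⟩)
      · exact Or.inr (Or.inr ⟨hcmp, hge, hzy⟩)
  set f : EuclideanSpace ℝ (Fin n) → ENNReal :=
    fun z => ENNReal.ofReal (‖x - z‖ ^ (-a) * ‖z - y‖ ^ (-b)) with hf
  have half_pos : (0:ℝ) < r / 2 := by linarith
  -- piece A1
  have hpA1 : ∫⁻ z in A1, f z ≤ ENNReal.ofReal ((2:ℝ) ^ b * Ka) := by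
    have hbd : ∀ z ∈ A1, f z
        ≤ ENNReal.ofReal ((r/2) ^ (-b)) * ENNReal.ofReal (‖z - x‖ ^ (-a)) := by
      rintro z ⟨hzc, hzb⟩
      have hry : r / 2 ≤ ‖z - y‖ := by
        have htri : r ≤ ‖x - z‖ + ‖z - y‖ := by
          rw [hrdef]
          simpa using norm_sub_le_norm_sub_add_norm_sub x z y
        have hzc' : ‖x - z‖ ≤ ‖z - y‖ := hzc; linarith
      rw [hf, ← ENNReal.ofReal_mul (Real.rpow_nonneg half_pos.le _)]
      apply ENNReal.ofReal_le_ofReal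
      rw [norm_sub_rev z x, mul_comm ((r/2) ^ (-b))]
      exact mul_le_mul_of_nonneg_left
        (Real.rpow_le_rpow_of_nonpos half_pos hry (neg_nonpos.2 hb.le))
        (Real.rpow_nonneg (norm_nonneg _) _)
    calc ∫⁻ z in A1, f z
        ≤ ∫⁻ z in A1, ENNReal.ofReal ((r/2) ^ (-b)) * ENNReal.ofReal (‖z - x‖ ^ (-a)) :=
          setLIntegral_mono (by fun_prop) hbd
      _ ≤ ∫⁻ z in ball x r, ENNReal.ofReal ((r/2) ^ (-b)) * ENNReal.ofReal (‖z - x‖ ^ (-a)) :=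
          lintegral_mono_set inter_subset_right
      _ = ENNReal.ofReal ((r/2) ^ (-b)) * ∫⁻ z in ball x r, ENNReal.ofReal (‖z - x‖ ^ (-a)) :=
          lintegral_const_mul' _ _ ENNReal.ofReal_ne_top
      _ ≤ ENNReal.ofReal ((r/2) ^ (-b)) * (ENNReal.ofReal (r ^ ((n:ℝ) - a)) * κa) :=
          mul_le_mul_right (hA_a x r hr) _
      _ = ENNReal.ofReal ((r/2) ^ (-b) * (r ^ ((n:ℝ) - a) * Ka)) := by
          rw [hκa', ← ENNReal.ofReal_mul (Real.rpow_nonneg hr.le _),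
            ← ENNReal.ofReal_mul (Real.rpow_nonneg half_pos.le _)]
      _ = ENNReal.ofReal ((2:ℝ) ^ b * Ka) := by
          congr 1
          have key : (r/2) ^ (-b) * r ^ ((n:ℝ) - a) = (2:ℝ) ^ b := by
            rw [Real.div_rpow hr.le two_pos.le, div_mul_eq_mul_div, ← Real.rpow_add hr,
              show -b + ((n:ℝ) - a) = 0 by linarith, Real.rpow_zero,
              Real.rpow_neg two_pos.le, one_div, inv_inv]
          calc (r/2) ^ (-b) * (r ^ ((n:ℝ) - a) * Ka)
              = ((r/2) ^ (-b) * r ^ ((n:ℝ) - a)) * Ka := by ring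
            _ = (2:ℝ) ^ b * Ka := by rw [key]
  -- piece B1
  have hpB1 : ∫⁻ z in B1, f z ≤ ENNReal.ofReal ((2:ℝ) ^ a * Kb) := by
    have hbd : ∀ z ∈ B1, f z
        ≤ ENNReal.ofReal ((r/2) ^ (-a)) * ENNReal.ofReal (‖z - y‖ ^ (-b)) := by
      rintro z ⟨hzc, hzb⟩
      have hrx : r / 2 ≤ ‖x - z‖ := by
        have htri : r ≤ ‖x - z‖ + ‖z - y‖ := by
          rw [hrdef]
          simpa using norm_sub_le_norm_sub_add_norm_sub x z y
        have hzc' : ‖z - y‖ ≤ ‖x - z‖ := hzc; linarith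
      rw [hf, ← ENNReal.ofReal_mul (Real.rpow_nonneg half_pos.le _)]
      apply ENNReal.ofReal_le_ofReal
      exact mul_le_mul_of_nonneg_right
        (Real.rpow_le_rpow_of_nonpos half_pos hrx (neg_nonpos.2 ha.le))
        (Real.rpow_nonneg (norm_nonneg _) _)
    calc ∫⁻ z in B1, f z
        ≤ ∫⁻ z in B1, ENNReal.ofReal ((r/2) ^ (-a)) * ENNReal.ofReal (‖z - y‖ ^ (-b)) :=
          setLIntegral_mono (by fun_prop) hbd
      _ ≤ ∫⁻ z in ball y r, ENNReal.ofReal ((r/2) ^ (-a)) * ENNReal.ofReal (‖z - y‖ ^ (-b)) :=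
          lintegral_mono_set inter_subset_right
      _ = ENNReal.ofReal ((r/2) ^ (-a)) * ∫⁻ z in ball y r, ENNReal.ofReal (‖z - y‖ ^ (-b)) :=
          lintegral_const_mul' _ _ ENNReal.ofReal_ne_top
      _ ≤ ENNReal.ofReal ((r/2) ^ (-a)) * (ENNReal.ofReal (r ^ ((n:ℝ) - b)) * κb) :=
          mul_le_mul_right (hA_b y r hr) _
      _ = ENNReal.ofReal ((r/2) ^ (-a) * (r ^ ((n:ℝ) - b) * Kb)) := by
          rw [hκb', ← ENNReal.ofReal_mul (Real.rpow_nonneg hr.le _),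
            ← ENNReal.ofReal_mul (Real.rpow_nonneg half_pos.le _)]
      _ = ENNReal.ofReal ((2:ℝ) ^ a * Kb) := by
          congr 1
          have key : (r/2) ^ (-a) * r ^ ((n:ℝ) - b) = (2:ℝ) ^ a := by
            rw [Real.div_rpow hr.le two_pos.le, div_mul_eq_mul_div, ← Real.rpow_add hr,
              show -a + ((n:ℝ) - b) = 0 by linarith, Real.rpow_zero,
              Real.rpow_neg two_pos.le, one_div, inv_inv]
          calc (r/2) ^ (-a) * (r ^ ((n:ℝ) - b) * Kb)
              = ((r/2) ^ (-a) * r ^ ((n:ℝ) - b)) * Kb := by ring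
            _ = (2:ℝ) ^ a * Kb := by rw [key]
  -- piece A2
  have hpA2 : ∫⁻ z in A2, f z ≤ ENNReal.ofReal (KB * (1 + Real.log (R / r))) := by
    have hbd : ∀ z ∈ A2, f z ≤ ENNReal.ofReal (‖z - x‖ ^ (-(n:ℝ))) := by
      rintro z ⟨hzc, hz1, hz2⟩
      have hzx0 : (0:ℝ) < ‖z - x‖ := lt_of_lt_of_le hr hz1
      have hxz0 : (0:ℝ) < ‖x - z‖ := by rwa [norm_sub_rev]
      apply ENNReal.ofReal_le_ofReal
      calc ‖x - z‖ ^ (-a) * ‖z - y‖ ^ (-b)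
          ≤ ‖x - z‖ ^ (-a) * ‖x - z‖ ^ (-b) := by
            apply mul_le_mul_of_nonneg_left
              (Real.rpow_le_rpow_of_nonpos hxz0 hzc (neg_nonpos.2 hb.le))
              (Real.rpow_nonneg (norm_nonneg _) _)
        _ = ‖z - x‖ ^ (-(n:ℝ)) := by
            rw [← Real.rpow_add hxz0, show -a + -b = -(n:ℝ) by linarith, norm_sub_rev]
    calc ∫⁻ z in A2, f z
        ≤ ∫⁻ z in A2, ENNReal.ofReal (‖z - x‖ ^ (-(n:ℝ))) := setLIntegral_mono (by fun_prop) hbd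
      _ ≤ ∫⁻ z in {z : EuclideanSpace ℝ (Fin n) | r ≤ ‖z - x‖ ∧ ‖z - x‖ ≤ R},
            ENNReal.ofReal (‖z - x‖ ^ (-(n:ℝ))) := lintegral_mono_set inter_subset_right
      _ ≤ κB * ENNReal.ofReal (1 + Real.log (R / r)) := hB x r R hr hrR
      _ = ENNReal.ofReal (KB * (1 + Real.log (R / r))) := by
          rw [hκB', ← ENNReal.ofReal_mul hKB0]
  -- piece B2
  have hpB2 : ∫⁻ z in B2, f z ≤ ENNReal.ofReal (KB * (1 + Real.log (R / r))) := by
    have hbd : ∀ z ∈ B2, f z ≤ ENNReal.ofReal (‖z - y‖ ^ (-(n:ℝ))) := by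
      rintro z ⟨hzc, hz1, hz2⟩
      have hzy0 : (0:ℝ) < ‖z - y‖ := lt_of_lt_of_le hr hz1
      apply ENNReal.ofReal_le_ofReal
      calc ‖x - z‖ ^ (-a) * ‖z - y‖ ^ (-b)
          ≤ ‖z - y‖ ^ (-a) * ‖z - y‖ ^ (-b) := by
            apply mul_le_mul_of_nonneg_right
              (Real.rpow_le_rpow_of_nonpos hzy0 hzc (neg_nonpos.2 ha.le))
              (Real.rpow_nonneg (norm_nonneg _) _)
        _ = ‖z - y‖ ^ (-(n:ℝ)) := by
            rw [← Real.rpow_add hzy0, show -a + -b = -(n:ℝ) by linarith]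
    calc ∫⁻ z in B2, f z
        ≤ ∫⁻ z in B2, ENNReal.ofReal (‖z - y‖ ^ (-(n:ℝ))) := setLIntegral_mono (by fun_prop) hbd
      _ ≤ ∫⁻ z in {z : EuclideanSpace ℝ (Fin n) | r ≤ ‖z - y‖ ∧ ‖z - y‖ ≤ R},
            ENNReal.ofReal (‖z - y‖ ^ (-(n:ℝ))) := lintegral_mono_set inter_subset_right
      _ ≤ κB * ENNReal.ofReal (1 + Real.log (R / r)) := hB y r R hr hrR
      _ = ENNReal.ofReal (KB * (1 + Real.log (R / r))) := by
          rw [hκB', ← ENNReal.ofReal_mul hKB0]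
  -- log comparison
  have hlogcmp : KB * (1 + Real.log (R / r)) ≤ KB * (1 + Real.log R) * (1 + |Real.log r|) := by
    have hlogdiv : Real.log (R / r) = Real.log R - Real.log r := Real.log_div hR0.ne' hr.ne'
    have habs' : -Real.log r ≤ |Real.log r| := neg_le_abs _
    have h0 : 0 ≤ Real.log R * |Real.log r| := mul_nonneg hlogR (abs_nonneg _)
    have key : 1 + Real.log (R / r) ≤ (1 + Real.log R) * (1 + |Real.log r|) := by
      rw [hlogdiv]; nlinarith [abs_nonneg (Real.log r)]
    calc KB * (1 + Real.log (R / r)) ≤ KB * ((1 + Real.log R) * (1 + |Real.log r|)) :=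
          mul_le_mul_of_nonneg_left key hKB0
      _ = KB * (1 + Real.log R) * (1 + |Real.log r|) := by ring
  have hconst : ∀ c : ℝ, 0 ≤ c → c ≤ c * (1 + |Real.log r|) := fun c hc => by
    nlinarith [abs_nonneg (Real.log r)]
  -- assemble
  calc ∫⁻ z in Ω, f z
      ≤ ∫⁻ z in (A1 ∪ A2) ∪ (B1 ∪ B2), f z := lintegral_mono_set hcover
    _ ≤ (∫⁻ z in A1 ∪ A2, f z) + ∫⁻ z in B1 ∪ B2, f z := lintegral_union_le _ _ _
    _ ≤ ((∫⁻ z in A1, f z) + ∫⁻ z in A2, f z) + ((∫⁻ z in B1, f z) + ∫⁻ z in B2, f z) :=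
        add_le_add (lintegral_union_le _ _ _) (lintegral_union_le _ _ _)
    _ ≤ (ENNReal.ofReal ((2:ℝ) ^ b * Ka) + ENNReal.ofReal (KB * (1 + Real.log (R / r))))
        + (ENNReal.ofReal ((2:ℝ) ^ a * Kb) + ENNReal.ofReal (KB * (1 + Real.log (R / r)))) :=
        add_le_add (add_le_add hpA1 hpA2) (add_le_add hpB1 hpB2)
    _ ≤ (ENNReal.ofReal ((2:ℝ) ^ b * Ka * (1 + |Real.log r|))
          + ENNReal.ofReal (KB * (1 + Real.log R) * (1 + |Real.log r|)))
        + (ENNReal.ofReal ((2:ℝ) ^ a * Kb * (1 + |Real.log r|))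
          + ENNReal.ofReal (KB * (1 + Real.log R) * (1 + |Real.log r|))) := by
        refine add_le_add (add_le_add ?_ ?_) (add_le_add ?_ ?_) <;> apply ENNReal.ofReal_le_ofReal
        · exact hconst _ (mul_nonneg (Real.rpow_nonneg two_pos.le _) hKa0)
        · exact hlogcmp
        · exact hconst _ (mul_nonneg (Real.rpow_nonneg two_pos.le _) hKb0)
        · exact hlogcmp
    _ = ENNReal.ofReal (((2:ℝ) ^ b * Ka + (2:ℝ) ^ a * Kb + 2 * (KB * (1 + Real.log R)))
          * (1 + |Real.log r|)) := by
        rw [← ENNReal.ofReal_add (by positivity) (by positivity),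
          ← ENNReal.ofReal_add (by positivity) (by positivity),
          ← ENNReal.ofReal_add (by positivity) (by positivity)]
        congr 1
        have h1 : 0 ≤ 1 + Real.log R := by linarith
        ring

end GiraudHelpers

/-- Giraud's lemma, critical case a + b = n: the composed kernel has at most a
logarithmic singularity. -/
theorem giraud_lemma_critical (n : ℕ) (Ω : Set (EuclideanSpace ℝ (Fin n)))
    (hΩm : MeasurableSet Ω) (hΩb : Bornology.IsBounded Ω)
    (K₁ K₂ : EuclideanSpace ℝ (Fin n) → EuclideanSpace ℝ (Fin n) → ℝ)
    (hK₁m : ∀ x, Measurable (K₁ x)) (hK₂m : ∀ y, Measurable fun z => K₂ z y)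
    (a b C₁ C₂ : ℝ) (ha : 0 < a) (han : a < n) (hb : 0 < b) (hbn : b < n)
    (hab : a + b = (n : ℝ))
    (hK₁ : ∀ x ∈ Ω, ∀ z ∈ Ω, x ≠ z → |K₁ x z| ≤ C₁ * ‖x - z‖ ^ (-a))
    (hK₂ : ∀ z ∈ Ω, ∀ y ∈ Ω, z ≠ y → |K₂ z y| ≤ C₂ * ‖z - y‖ ^ (-b)) :
    ∃ C > 0, ∀ x ∈ Ω, ∀ y ∈ Ω, x ≠ y →
      |∫ z in Ω, K₁ x z * K₂ z y| ≤ C * (1 + |Real.log ‖x - y‖|) := by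
  
  rcases Nat.eq_zero_or_pos n with rfl | hn
  · exfalso; push_cast at han; linarith
  obtain ⟨κa, hκa, hA_a⟩ := lemA hn ha han
  obtain ⟨κb, hκb, hA_b⟩ := lemA hn hb hbn
  obtain ⟨κB, hκB, hB⟩ := lemB hn
  have hcore : ∀ x ∈ Ω, ∀ y ∈ Ω, x ≠ y →
      ∫⁻ z in Ω, ENNReal.ofReal (‖x - z‖ ^ (-a) * ‖z - y‖ ^ (-b))
        ≤ ENNReal.ofReal (((2:ℝ) ^ b * κa.toReal + (2:ℝ) ^ a * κb.toReal
            + 2 * (κB.toReal * (1 + Real.log (max (Metric.diam Ω) 1))))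
          * (1 + |Real.log ‖x - y‖|)) := fun x hx y hy hxy =>
    giraud_core n Ω hΩb a b ha han hb hbn hab hn κa κb κB hκa hκb hκB hA_a hA_b hB hx hy hxy

  haveI : Nonempty (Fin n) := ⟨⟨0, hn⟩⟩
  set m : ℝ := (2:ℝ) ^ b * κa.toReal + (2:ℝ) ^ a * κb.toReal
      + 2 * (κB.toReal * (1 + Real.log (max (Metric.diam Ω) 1))) with hm
  have hlogR : 0 ≤ Real.log (max (Metric.diam Ω) 1) := Real.log_nonneg (le_max_right _ _)
  have hm0 : 0 ≤ m := by
    have h1 : 0 ≤ (2:ℝ) ^ b * κa.toReal :=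
      mul_nonneg (Real.rpow_nonneg two_pos.le _) ENNReal.toReal_nonneg
    have h2 : 0 ≤ (2:ℝ) ^ a * κb.toReal :=
      mul_nonneg (Real.rpow_nonneg two_pos.le _) ENNReal.toReal_nonneg
    have h3 : 0 ≤ 2 * (κB.toReal * (1 + Real.log (max (Metric.diam Ω) 1))) := by
      have : (0:ℝ) ≤ 1 + Real.log (max (Metric.diam Ω) 1) := by linarith
      have := mul_nonneg (ENNReal.toReal_nonneg (a := κB)) this
      linarith
    rw [hm]; linarith
  set c : ℝ := max C₁ 0 * max C₂ 0 with hc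
  have hc0 : 0 ≤ c := mul_nonneg (le_max_right _ _) (le_max_right _ _)
  refine ⟨c * m + 1, by positivity, ?_⟩
  intro x hx y hy hxy
  have habs : 0 ≤ 1 + |Real.log ‖x - y‖| := by positivity
  have hxae : ∀ᵐ z : EuclideanSpace ℝ (Fin n) ∂volume, z ≠ x := by
    rw [ae_iff]
    have h : {z : EuclideanSpace ℝ (Fin n) | ¬ z ≠ x} = {x} := by ext z; simp
    rw [h]; exact measure_singleton x
  have hyae : ∀ᵐ z : EuclideanSpace ℝ (Fin n) ∂volume, z ≠ y := by
    rw [ae_iff]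
    have h : {z : EuclideanSpace ℝ (Fin n) | ¬ z ≠ y} = {y} := by ext z; simp
    rw [h]; exact measure_singleton y
  have step1 : |∫ z in Ω, K₁ x z * K₂ z y|
      ≤ (∫⁻ z in Ω, ENNReal.ofReal ‖K₁ x z * K₂ z y‖).toReal := by
    rw [← Real.norm_eq_abs]
    exact norm_integral_le_lintegral_norm _
  have step2 : ∫⁻ z in Ω, ENNReal.ofReal ‖K₁ x z * K₂ z y‖
      ≤ ∫⁻ z in Ω, ENNReal.ofReal c * ENNReal.ofReal (‖x - z‖ ^ (-a) * ‖z - y‖ ^ (-b)) := by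
    apply setLIntegral_mono_ae (by fun_prop)
    filter_upwards [hxae, hyae] with z hzx hzy hzΩ
    rw [← ENNReal.ofReal_mul hc0]
    apply ENNReal.ofReal_le_ofReal
    have h1 : |K₁ x z| ≤ max C₁ 0 * ‖x - z‖ ^ (-a) :=
      (hK₁ x hx z hzΩ (Ne.symm hzx)).trans
        (mul_le_mul_of_nonneg_right (le_max_left _ _) (Real.rpow_nonneg (norm_nonneg _) _))
    have h2 : |K₂ z y| ≤ max C₂ 0 * ‖z - y‖ ^ (-b) :=
      (hK₂ z hzΩ y hy hzy).trans
        (mul_le_mul_of_nonneg_right (le_max_left _ _) (Real.rpow_nonneg (norm_nonneg _) _))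
    calc ‖K₁ x z * K₂ z y‖ = |K₁ x z| * |K₂ z y| := by
          rw [Real.norm_eq_abs, abs_mul]
      _ ≤ (max C₁ 0 * ‖x - z‖ ^ (-a)) * (max C₂ 0 * ‖z - y‖ ^ (-b)) :=
          mul_le_mul h1 h2 (abs_nonneg _)
            (mul_nonneg (le_max_right _ _) (Real.rpow_nonneg (norm_nonneg _) _))
      _ = c * (‖x - z‖ ^ (-a) * ‖z - y‖ ^ (-b)) := by rw [hc]; ring
  have step3 : ∫⁻ z in Ω, ENNReal.ofReal c * ENNReal.ofReal (‖x - z‖ ^ (-a) * ‖z - y‖ ^ (-b))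
      = ENNReal.ofReal c * ∫⁻ z in Ω, ENNReal.ofReal (‖x - z‖ ^ (-a) * ‖z - y‖ ^ (-b)) :=
    lintegral_const_mul' _ _ ENNReal.ofReal_ne_top
  have step4 : ENNReal.ofReal c * (∫⁻ z in Ω, ENNReal.ofReal (‖x - z‖ ^ (-a) * ‖z - y‖ ^ (-b)))
      ≤ ENNReal.ofReal (c * (m * (1 + |Real.log ‖x - y‖|))) := by
    rw [ENNReal.ofReal_mul hc0]
    exact mul_le_mul_right (hcore x hx y hy hxy) _
  have htotal : ∫⁻ z in Ω, ENNReal.ofReal ‖K₁ x z * K₂ z y‖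
      ≤ ENNReal.ofReal (c * (m * (1 + |Real.log ‖x - y‖|))) :=
    step2.trans (step3.le.trans step4)
  have hfin : (∫⁻ z in Ω, ENNReal.ofReal ‖K₁ x z * K₂ z y‖).toReal
      ≤ c * (m * (1 + |Real.log ‖x - y‖|)) :=
    ENNReal.toReal_le_of_le_ofReal (by positivity) htotal
  calc |∫ z in Ω, K₁ x z * K₂ z y| ≤ _ := step1
    _ ≤ c * (m * (1 + |Real.log ‖x - y‖|)) := hfin
    _ ≤ (c * m + 1) * (1 + |Real.log ‖x - y‖|) := by nlinarith
end

section
/- Giraud's lemma, subcritical case: under the hypotheses above but with a + b < n, the composed kernel K(x,y) = ∫_Ω K₁(x,z)K₂(z,y) dz is bounded: |K(x,y)| ≤ C for all x, y in the bounded set Ω, with C depending on n, a, b, C₁, C₂ and the diameter of Ω. -/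
open MeasureTheory Filter
open scoped ENNReal NNReal

open Set Metric in
/-- Uniform bound on the lintegral of a subcritical Riesz kernel over a ball. -/
lemma giraud_aux_lintegral (n : ℕ) (s R : ℝ) (hs : 0 < s) (hsn : s < n) (hR : 0 < R) :
    ∃ J : ℝ≥0∞, J ≠ ∞ ∧ ∀ c : EuclideanSpace ℝ (Fin n),
      (∫⁻ z in ball c R, ENNReal.ofReal (‖z - c‖ ^ (-s))) ≤ J := by
  have hn1 : (1:ℝ) < (n:ℝ) / s := (one_lt_div hs).mpr hsn
  have hexp : (-s)⁻¹ * (n:ℝ) < -1 := by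
    rw [← neg_inv, neg_mul, neg_lt_neg_iff, inv_mul_eq_div]
    exact hn1
  set Itail : ℝ≥0∞ := ∫⁻ t in Ioi (1:ℝ), ENNReal.ofReal (t ^ ((-s)⁻¹ * (n:ℝ))) with hIt
  have hItail : Itail < ∞ :=
    (integrableOn_Ioi_rpow_of_lt hexp one_pos).setLIntegral_lt_top
  refine ⟨volume (Metric.ball (0 : EuclideanSpace ℝ (Fin n)) R) * volume (Ioc (0:ℝ) 1) + Itail * volume (Metric.ball (0 : EuclideanSpace ℝ (Fin n)) 1), ?_, ?_⟩
  · refine ENNReal.add_ne_top.mpr ⟨?_, ?_⟩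
    · exact (ENNReal.mul_lt_top measure_ball_lt_top (by simp [Real.volume_Ioc])).ne
    · exact (ENNReal.mul_lt_top hItail measure_ball_lt_top).ne
  intro c
  have hf0 : ∀ z : EuclideanSpace ℝ (Fin n), 0 ≤ ‖z - c‖ ^ (-s) := fun z => Real.rpow_nonneg (norm_nonneg _) _
  have hfm : Measurable fun z : EuclideanSpace ℝ (Fin n) => ‖z - c‖ ^ (-s) :=
    by fun_prop
  rw [lintegral_eq_lintegral_meas_le (volume.restrict (Metric.ball c R)) (ae_of_all _ hf0)
    hfm.aemeasurable]
  calc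
    ∫⁻ t in Ioi (0:ℝ), (volume.restrict (Metric.ball c R)) {z : EuclideanSpace ℝ (Fin n) | t ≤ ‖z - c‖ ^ (-s)}
        ≤ ∫⁻ t in Ioc (0:ℝ) 1 ∪ Ioi 1, (volume.restrict (Metric.ball c R)) {z : EuclideanSpace ℝ (Fin n) | t ≤ ‖z - c‖ ^ (-s)} :=
      lintegral_mono_set Ioi_subset_Ioc_union_Ioi
    _ ≤ (∫⁻ t in Ioc (0:ℝ) 1, (volume.restrict (Metric.ball c R)) {z : EuclideanSpace ℝ (Fin n) | t ≤ ‖z - c‖ ^ (-s)})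
        + ∫⁻ t in Ioi (1:ℝ), (volume.restrict (Metric.ball c R)) {z : EuclideanSpace ℝ (Fin n) | t ≤ ‖z - c‖ ^ (-s)} :=
      lintegral_union_le _ _ _
    _ ≤ volume (Metric.ball (0 : EuclideanSpace ℝ (Fin n)) R) * volume (Ioc (0:ℝ) 1) + Itail * volume (Metric.ball (0 : EuclideanSpace ℝ (Fin n)) 1) := by
      gcongr ?_ + ?_
      · calc
          ∫⁻ t in Ioc (0:ℝ) 1, (volume.restrict (Metric.ball c R)) {z : EuclideanSpace ℝ (Fin n) | t ≤ ‖z - c‖ ^ (-s)}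
              ≤ ∫⁻ _t in Ioc (0:ℝ) 1, volume (Metric.ball c R) := by
            refine lintegral_mono fun t => ?_
            exact le_trans (measure_mono (subset_univ _)) (by simp)
          _ = volume (Metric.ball c R) * volume (Ioc (0:ℝ) 1) := setLIntegral_const _ _
          _ = volume (Metric.ball (0 : EuclideanSpace ℝ (Fin n)) R) * volume (Ioc (0:ℝ) 1) := by
            rw [Measure.addHaar_ball_center]
      · calc
          ∫⁻ t in Ioi (1:ℝ), (volume.restrict (Metric.ball c R)) {z : EuclideanSpace ℝ (Fin n) | t ≤ ‖z - c‖ ^ (-s)}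
              ≤ ∫⁻ t in Ioi (1:ℝ), ENNReal.ofReal (t ^ ((-s)⁻¹ * (n:ℝ))) * volume (Metric.ball (0 : EuclideanSpace ℝ (Fin n)) 1) := by
            refine setLIntegral_mono' measurableSet_Ioi fun t ht => ?_
            have ht1 : (1:ℝ) < t := ht
            have ht0 : (0:ℝ) < t := lt_trans one_pos ht1
            have hsub : {z : EuclideanSpace ℝ (Fin n) | t ≤ ‖z - c‖ ^ (-s)} ⊆ closedBall c (t ^ (-s)⁻¹) := by
              intro z hz
              simp only [mem_setOf_eq] at hz
              have hz0 : 0 < ‖z - c‖ := by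
                rcases eq_or_lt_of_le (norm_nonneg (z - c)) with h | h
                · exfalso
                  rw [← h, Real.zero_rpow (neg_ne_zero.mpr hs.ne')] at hz
                  linarith
                · exact h
              have := (Real.le_rpow_inv_iff_of_neg hz0 ht0 (by linarith : -s < 0)).mpr hz
              simpa [mem_closedBall, dist_eq_norm] using this
            calc
              (volume.restrict (Metric.ball c R)) {z : EuclideanSpace ℝ (Fin n) | t ≤ ‖z - c‖ ^ (-s)}
                  ≤ volume {z : EuclideanSpace ℝ (Fin n) | t ≤ ‖z - c‖ ^ (-s)} := Measure.restrict_le_self _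
              _ ≤ volume (closedBall c (t ^ (-s)⁻¹)) := measure_mono hsub
              _ = ENNReal.ofReal ((t ^ (-s)⁻¹) ^ Module.finrank ℝ (EuclideanSpace ℝ (Fin n))) * volume (Metric.ball (0 : EuclideanSpace ℝ (Fin n)) 1) :=
                Measure.addHaar_closedBall volume c (Real.rpow_nonneg ht0.le _)
              _ = ENNReal.ofReal (t ^ ((-s)⁻¹ * (n:ℝ))) * volume (Metric.ball (0 : EuclideanSpace ℝ (Fin n)) 1) := by
                congr 1
                rw [← Real.rpow_natCast (t ^ (-s)⁻¹) (Module.finrank ℝ (EuclideanSpace ℝ (Fin n))),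
                  ← Real.rpow_mul ht0.le, finrank_euclideanSpace_fin]
          _ = Itail * volume (Metric.ball (0 : EuclideanSpace ℝ (Fin n)) 1) := by
            rw [hIt, lintegral_mul_const' _ _ measure_ball_lt_top.ne]
    _ = _ := rfl

open Set Metric in
/-- Uniform integrability and integral bound for a subcritical Riesz kernel. -/
lemma giraud_aux_int (n : ℕ) (s R : ℝ) (hs : 0 < s) (hsn : s < n) (hR : 0 < R) :
    ∃ I : ℝ, 0 ≤ I ∧ ∀ (c : EuclideanSpace ℝ (Fin n)) (Ω : Set (EuclideanSpace ℝ (Fin n))),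
      MeasurableSet Ω → Ω ⊆ ball c R →
      IntegrableOn (fun z => ‖z - c‖ ^ (-s)) Ω ∧
        (∫ z in Ω, ‖z - c‖ ^ (-s)) ≤ I := by
  obtain ⟨J, hJ, hJle⟩ := giraud_aux_lintegral n s R hs hsn hR
  refine ⟨J.toReal, ENNReal.toReal_nonneg, fun c Ω hΩm hΩsub => ?_⟩
  have hf0 : ∀ z : EuclideanSpace ℝ (Fin n), 0 ≤ ‖z - c‖ ^ (-s) := fun z => Real.rpow_nonneg (norm_nonneg _) _
  have hfm : Measurable fun z : EuclideanSpace ℝ (Fin n) => ‖z - c‖ ^ (-s) :=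
    by fun_prop
  have hle : (∫⁻ z in Ω, ENNReal.ofReal (‖z - c‖ ^ (-s))) ≤ J :=
    le_trans (lintegral_mono_set hΩsub) (hJle c)
  have hint : IntegrableOn (fun z => ‖z - c‖ ^ (-s)) Ω := by
    refine ⟨hfm.aestronglyMeasurable, ?_⟩
    rw [hasFiniteIntegral_iff_ofReal (ae_of_all _ hf0)]
    exact lt_of_le_of_lt hle hJ.lt_top
  refine ⟨hint, ?_⟩
  rw [integral_eq_lintegral_of_nonneg_ae (ae_of_all _ hf0) hfm.aestronglyMeasurable]
  exact ENNReal.toReal_mono hJ hle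

lemma giraud_prod_rpow_le {p q a b : ℝ} (hp : 0 < p) (hq : 0 < q) (ha : 0 < a) (hb : 0 < b) :
    p ^ (-a) * q ^ (-b) ≤ p ^ (-(a + b)) + q ^ (-(a + b)) := by
  rcases le_total p q with h | h
  · calc
      p ^ (-a) * q ^ (-b) ≤ p ^ (-a) * p ^ (-b) := by
        refine mul_le_mul_of_nonneg_left ?_ (Real.rpow_nonneg hp.le _)
        exact Real.rpow_le_rpow_of_nonpos hp h (by linarith)
      _ = p ^ (-(a + b)) := by rw [← Real.rpow_add hp]; ring_nf
      _ ≤ p ^ (-(a + b)) + q ^ (-(a + b)) :=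
        le_add_of_nonneg_right (Real.rpow_nonneg hq.le _)
  · calc
      p ^ (-a) * q ^ (-b) ≤ q ^ (-a) * q ^ (-b) := by
        refine mul_le_mul_of_nonneg_right ?_ (Real.rpow_nonneg hq.le _)
        exact Real.rpow_le_rpow_of_nonpos hq h (by linarith)
      _ = q ^ (-(a + b)) := by rw [← Real.rpow_add hq]; ring_nf
      _ ≤ p ^ (-(a + b)) + q ^ (-(a + b)) :=
        le_add_of_nonneg_left (Real.rpow_nonneg hp.le _)

/-- Giraud's lemma, subcritical case a + b < n: the composed kernel is bounded. -/
theorem giraud_lemma_subcritical (n : ℕ) (Ω : Set (EuclideanSpace ℝ (Fin n)))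
    (hΩm : MeasurableSet Ω) (hΩb : Bornology.IsBounded Ω)
    (K₁ K₂ : EuclideanSpace ℝ (Fin n) → EuclideanSpace ℝ (Fin n) → ℝ)
    (hK₁m : ∀ x, Measurable (K₁ x)) (hK₂m : ∀ y, Measurable fun z => K₂ z y)
    (a b C₁ C₂ : ℝ) (ha : 0 < a) (han : a < n) (hb : 0 < b) (hbn : b < n)
    (hab : a + b < (n : ℝ))
    (hK₁ : ∀ x ∈ Ω, ∀ z ∈ Ω, x ≠ z → |K₁ x z| ≤ C₁ * ‖x - z‖ ^ (-a))
    (hK₂ : ∀ z ∈ Ω, ∀ y ∈ Ω, z ≠ y → |K₂ z y| ≤ C₂ * ‖z - y‖ ^ (-b)) :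
    ∃ C > 0, ∀ x ∈ Ω, ∀ y ∈ Ω, |∫ z in Ω, K₁ x z * K₂ z y| ≤ C := by
  classical

  obtain ⟨r, hr⟩ := hΩb.subset_closedBall (0 : EuclideanSpace ℝ (Fin n))
  set R : ℝ := 2 * |r| + 1 with hR
  have hRpos : 0 < R := by positivity
  have hsub : ∀ x ∈ Ω, Ω ⊆ Metric.ball x R := by
    intro x hx z hz
    have hz' : ‖z‖ ≤ |r| := le_trans (by simpa using hr hz) (le_abs_self r)
    have hx' : ‖x‖ ≤ |r| := le_trans (by simpa using hr hx) (le_abs_self r)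
    have : ‖z - x‖ ≤ ‖z‖ + ‖x‖ := norm_sub_le _ _
    simp only [Metric.mem_ball, dist_eq_norm]
    linarith
  set s : ℝ := a + b with hsdef
  have hs : 0 < s := by positivity
  obtain ⟨I, hI0, hI⟩ := giraud_aux_int n s R hs hab hRpos
  set M : ℝ := max C₁ 0 * max C₂ 0 with hM
  have hM0 : 0 ≤ M := mul_nonneg (le_max_right _ _) (le_max_right _ _)
  refine ⟨M * (I + I) + 1, by positivity, fun x hx y hy => ?_⟩
  obtain ⟨hix, hbx⟩ := hI x Ω hΩm (hsub x hx)
  obtain ⟨hiy, hby⟩ := hI y Ω hΩm (hsub y hy)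
  set g : EuclideanSpace ℝ (Fin n) → ℝ := fun z => M * (‖z - x‖ ^ (-s) + ‖z - y‖ ^ (-s)) with hg
  have hgint : IntegrableOn g Ω := (hix.add hiy).const_mul M
  have hfmeas : AEStronglyMeasurable (fun z => K₁ x z * K₂ z y) (volume.restrict Ω) :=
    ((hK₁m x).mul (hK₂m y)).aestronglyMeasurable
  have hn0 : 0 < n := by
    have : (0:ℝ) < n := lt_trans ha han
    exact_mod_cast this
  haveI : Nontrivial (EuclideanSpace ℝ (Fin n)) :=
    nontrivial_of_ne (EuclideanSpace.single (⟨0, hn0⟩ : Fin n) 1) 0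
      (fun h => by simpa using congrArg (fun v => v ⟨0, hn0⟩) h)
  have hnex : ∀ᵐ z : EuclideanSpace ℝ (Fin n) ∂volume, z ≠ x := by
    rw [ae_iff]
    simpa [not_not, Set.setOf_eq_eq_singleton] using measure_singleton x
  have hney : ∀ᵐ z : EuclideanSpace ℝ (Fin n) ∂volume, z ≠ y := by
    rw [ae_iff]
    simpa [not_not, Set.setOf_eq_eq_singleton] using measure_singleton y
  have hae : ∀ᵐ z ∂(volume.restrict Ω), ‖K₁ x z * K₂ z y‖ ≤ g z := by
    filter_upwards [ae_restrict_of_ae hnex, ae_restrict_of_ae hney, ae_restrict_mem hΩm]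
      with z hzx hzy hzΩ
    have hpx : 0 < ‖x - z‖ := by
      rw [norm_pos_iff, sub_ne_zero]; exact fun h => hzx h.symm
    have hpy : 0 < ‖z - y‖ := by
      rw [norm_pos_iff, sub_ne_zero]; exact hzy
    have h1 : |K₁ x z| ≤ max C₁ 0 * ‖x - z‖ ^ (-a) :=
      le_trans (hK₁ x hx z hzΩ (fun h => hzx h.symm))
        (mul_le_mul_of_nonneg_right (le_max_left _ _) (Real.rpow_nonneg hpx.le _))
    have h2 : |K₂ z y| ≤ max C₂ 0 * ‖z - y‖ ^ (-b) :=
      le_trans (hK₂ z hzΩ y hy hzy)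
        (mul_le_mul_of_nonneg_right (le_max_left _ _) (Real.rpow_nonneg hpy.le _))
    calc
      ‖K₁ x z * K₂ z y‖ = |K₁ x z| * |K₂ z y| := by rw [Real.norm_eq_abs, abs_mul]
      _ ≤ (max C₁ 0 * ‖x - z‖ ^ (-a)) * (max C₂ 0 * ‖z - y‖ ^ (-b)) := by
        refine mul_le_mul h1 h2 (abs_nonneg _) ?_
        exact mul_nonneg (le_max_right _ _) (Real.rpow_nonneg hpx.le _)
      _ = M * (‖x - z‖ ^ (-a) * ‖z - y‖ ^ (-b)) := by rw [hM]; ring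
      _ ≤ M * (‖x - z‖ ^ (-s) + ‖z - y‖ ^ (-s)) := by
        refine mul_le_mul_of_nonneg_left ?_ hM0
        exact giraud_prod_rpow_le hpx hpy ha hb
      _ = g z := by rw [hg, norm_sub_rev x z]
  have hfi : IntegrableOn (fun z => K₁ x z * K₂ z y) Ω :=
    Integrable.mono' hgint hfmeas hae
  calc
    |∫ z in Ω, K₁ x z * K₂ z y| ≤ ∫ z in Ω, ‖K₁ x z * K₂ z y‖ := by
      rw [← Real.norm_eq_abs]
      exact norm_integral_le_integral_norm _
    _ ≤ ∫ z in Ω, g z := integral_mono_ae hfi.norm hgint hae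
    _ = M * ((∫ z in Ω, ‖z - x‖ ^ (-s)) + ∫ z in Ω, ‖z - y‖ ^ (-s)) := by
      rw [hg, integral_const_mul, integral_add hix hiy]
    _ ≤ M * (I + I) := by
      refine mul_le_mul_of_nonneg_left (add_le_add hbx hby) hM0
    _ ≤ M * (I + I) + 1 := by linarith
end

section
/- If u is an entire biharmonic function on ℝⁿ (Δ²u = 0 everywhere) whose second derivatives satisfy |D²u(y)| ≤ C(1+|y|)^{2−n} for some n ≥ 3, then u is an affine function (u(x) = a·x + b). -/
open MeasureTheory Filter

open Metric Topology

abbrev Eu (n : ℕ) := EuclideanSpace ℝ (Fin n)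

noncomputable def pd {n : ℕ} (e : Eu n) (f : Eu n → ℝ) : Eu n → ℝ := fun y => fderiv ℝ f y e

lemma pd_contDiff {n : ℕ} {m : ℕ} {f : Eu n → ℝ} (e : Eu n) (hf : ContDiff ℝ (m+1) f) :
    ContDiff ℝ m (pd e f) := by
  have h1 : ContDiff ℝ m (fderiv ℝ f) := hf.fderiv_right (by exact_mod_cast le_rfl)
  exact h1.clm_apply contDiff_const

lemma pd_pd_apply {n : ℕ} {f : Eu n → ℝ} (hf : ContDiff ℝ 2 f) (a b y : Eu n) :
    pd a (pd b f) y = fderiv ℝ (fderiv ℝ f) y a b := by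
  have hdiff : DifferentiableAt ℝ (fderiv ℝ f) y :=
    ((hf.fderiv_right (m := 1) (by norm_num)).differentiable one_ne_zero) y
  show fderiv ℝ (fun z => fderiv ℝ f z b) y a = _
  rw [fderiv_clm_apply hdiff (differentiableAt_const b)]
  simp

lemma pd_swap {n : ℕ} {f : Eu n → ℝ} (hf : ContDiff ℝ 2 f) (a b : Eu n) :
    pd a (pd b f) = pd b (pd a f) := by
  funext y
  rw [pd_pd_apply hf, pd_pd_apply hf]
  exact (hf.contDiffAt.isSymmSndFDerivAt (by norm_num)) a b

lemma pd_sum {n : ℕ} {ι : Type*} (s : Finset ι) (f : ι → Eu n → ℝ) (e : Eu n)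
    (hf : ∀ i ∈ s, Differentiable ℝ (f i)) :
    pd e (fun y => ∑ i ∈ s, f i y) = fun y => ∑ i ∈ s, pd e (f i) y := by
  funext y
  show fderiv ℝ _ y e = _
  rw [fderiv_fun_sum (fun i hi => (hf i hi).differentiableAt)]
  simp [pd]

lemma clm_apply_eq_sum {n : ℕ} (ℓ : Eu n →L[ℝ] ℝ) (y : Eu n) :
    ℓ y = ∑ i, y i * ℓ (EuclideanSpace.single i 1) := by
  have hy : y = ∑ i, y i • EuclideanSpace.single i (1:ℝ) := by
    have := (EuclideanSpace.basisFun (Fin n) ℝ).sum_repr y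
    simp only [EuclideanSpace.basisFun_repr, EuclideanSpace.basisFun_apply] at this
    exact this.symm
  conv_lhs => rw [hy]
  rw [map_sum]
  simp [smul_eq_mul]

noncomputable def bmp : ContDiffBump (3/2 : ℝ) := ⟨1/4, 1/2, by norm_num, by norm_num⟩

noncomputable def Psi : ℝ → ℝ := fun s => ∫ t in s..(2:ℝ), bmp t

noncomputable def Phi {n : ℕ} : Eu n → ℝ := fun y => Psi (‖y‖^2)

noncomputable def phi {n : ℕ} : Eu n → ℝ := fun y => (-2) * bmp (‖y‖^2)

lemma bmp_zero {s : ℝ} (hs : 2 ≤ s) : bmp s = 0 := by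
  apply bmp.zero_of_le_dist
  rw [Real.dist_eq]
  rw [abs_of_nonneg (by linarith : (0:ℝ) ≤ s - 3/2)]
  show (1/2 : ℝ) ≤ s - 3/2
  linarith

lemma bmp_mem_of_ne {s : ℝ} (hs : bmp s ≠ 0) : s ∈ Metric.ball (3/2 : ℝ) (1/2) := by
  have := bmp.support_eq (c := (3/2:ℝ))
  have hmem : s ∈ Function.support bmp := hs
  rw [this] at hmem
  simpa [bmp] using hmem

lemma hasDerivAt_Psi (s : ℝ) : HasDerivAt Psi (-(bmp s)) s := by
  have h := ((bmp.continuous.integral_hasStrictDerivAt 2 s).hasDerivAt).neg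
  have hP : Psi = -fun u => ∫ x in (2:ℝ)..u, bmp x := by
    funext u
    rw [Psi, intervalIntegral.integral_symm]
    rfl
  rw [hP]; exact h

lemma Psi_zero {s : ℝ} (hs : 2 ≤ s) : Psi s = 0 := by
  rw [Psi]
  rw [intervalIntegral.integral_congr (g := fun _ => (0:ℝ))]
  · simp
  · intro t ht
    rw [Set.uIcc_of_ge (by linarith : (2:ℝ) ≤ s)] at ht
    exact bmp_zero ht.1

lemma hasFDerivAt_Phi {n : ℕ} (y : Eu n) :
    HasFDerivAt (Phi (n := n)) ((-(bmp (‖y‖^2))) • (2 • (innerSL ℝ y))) y := by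
  exact (hasDerivAt_Psi (‖y‖^2)).comp_hasFDerivAt y (hasStrictFDerivAt_norm_sq y).hasFDerivAt

lemma fderiv_Phi {n : ℕ} (y e : Eu n) :
    fderiv ℝ (Phi (n := n)) y e = phi y * (inner ℝ y e : ℝ) := by
  rw [(hasFDerivAt_Phi y).fderiv]
  simp [phi]
  ring

lemma fderiv_Phi_single {n : ℕ} (y : Eu n) (i : Fin n) :
    fderiv ℝ (Phi (n := n)) y (EuclideanSpace.single i 1) = phi y * y i := by
  rw [fderiv_Phi]
  congr 1
  have := EuclideanSpace.inner_single_right (𝕜 := ℝ) i 1 y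
  simpa using this

lemma differentiable_Phi {n : ℕ} : Differentiable ℝ (Phi (n := n)) :=
  fun y => (hasFDerivAt_Phi y).differentiableAt

lemma continuous_phi {n : ℕ} : Continuous (phi (n := n)) := by
  exact continuous_const.mul (bmp.continuous.comp (continuous_norm.pow 2))

lemma Phi_zero_of {n : ℕ} {y : Eu n} (hy : 2 ≤ ‖y‖) : Phi y = 0 := by
  apply Psi_zero; nlinarith [norm_nonneg y]

lemma phi_zero_of {n : ℕ} {y : Eu n} (hy : 2 ≤ ‖y‖) : phi y = 0 := by
  rw [phi, bmp_zero (by nlinarith [norm_nonneg y])]; ring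

lemma hasCompactSupport_Phi {n : ℕ} : HasCompactSupport (Phi (n := n)) := by
  apply HasCompactSupport.intro (isCompact_closedBall (0 : Eu n) 2)
  intro y hy
  apply Phi_zero_of
  by_contra h
  exact hy (mem_closedBall_zero_iff.2 (le_of_not_ge h))

lemma norm_le_two_of_phi_ne {n : ℕ} {y : Eu n} (hy : phi y ≠ 0) : ‖y‖ ≤ 2 := by
  by_contra h
  exact hy (phi_zero_of (le_of_lt (lt_of_not_ge h)))

lemma one_le_norm_of_phi_ne {n : ℕ} {y : Eu n} (hy : phi y ≠ 0) : 1 ≤ ‖y‖ := by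
  have hb : bmp (‖y‖^2) ≠ 0 := by
    intro h; exact hy (by rw [phi, h]; ring)
  have := bmp_mem_of_ne hb
  rw [Metric.mem_ball, Real.dist_eq] at this
  have h1 : (1:ℝ) < ‖y‖^2 := by
    rcases abs_lt.1 this with ⟨h2, _⟩; linarith
  nlinarith [norm_nonneg y]

lemma hasCompactSupport_phi {n : ℕ} : HasCompactSupport (phi (n := n)) :=
  HasCompactSupport.intro (isCompact_closedBall 0 2) (fun y hy => phi_zero_of (by
    by_contra h
    exact hy (mem_closedBall_zero_iff.2 (le_of_not_ge h))))

lemma integral_phi_ne {n : ℕ} (hn : 0 < n) : ∫ y : Eu n, phi y ≠ 0 := by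
  have hint : Integrable (fun y : Eu n => (2:ℝ) * bmp (‖y‖^2)) volume := by
    apply Continuous.integrable_of_hasCompactSupport
    · exact continuous_const.mul (bmp.continuous.comp (continuous_norm.pow 2))
    · apply HasCompactSupport.intro (isCompact_closedBall (0 : Eu n) 2)
      intro y hy
      have h2 : (2:ℝ) < ‖y‖ := by
        by_contra h
        exact hy (mem_closedBall_zero_iff.2 (not_lt.1 h))
      rw [bmp_zero (by nlinarith)]
      ring
  have hnn : 0 ≤ (fun y : Eu n => (2:ℝ) * bmp (‖y‖^2)) := by
    intro y
    simpa using mul_nonneg (by norm_num : (0:ℝ) ≤ 2) bmp.nonneg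
  have hpos : 0 < ∫ y : Eu n, (2 : ℝ) * bmp (‖y‖^2) := by
    rw [integral_pos_iff_support_of_nonneg hnn hint]
    have hsub : (fun y : Eu n => ‖y‖^2) ⁻¹' (Metric.ball (3/2 : ℝ) (1/2)) ⊆
        Function.support (fun y : Eu n => (2:ℝ) * bmp (‖y‖^2)) := by
      intro y hy
      have hpos := bmp.pos_of_mem_ball (by simpa [bmp] using hy)
      simp only [Function.mem_support]
      exact ne_of_gt (by linarith)
    have hopen : IsOpen ((fun y : Eu n => ‖y‖^2) ⁻¹' (Metric.ball (3/2 : ℝ) (1/2))) :=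
      (Metric.isOpen_ball).preimage (continuous_norm.pow 2)
    have hne : ((fun y : Eu n => ‖y‖^2) ⁻¹' (Metric.ball (3/2 : ℝ) (1/2))).Nonempty := by
      refine ⟨EuclideanSpace.single (⟨0, hn⟩ : Fin n) (Real.sqrt (3/2)), ?_⟩
      simp only [Set.mem_preimage, EuclideanSpace.norm_single]
      rw [Real.norm_eq_abs, abs_of_nonneg (Real.sqrt_nonneg _), Real.sq_sqrt (by norm_num)]
      norm_num [Real.dist_eq]
    calc (0:ENNReal) < volume ((fun y : Eu n => ‖y‖^2) ⁻¹' (Metric.ball (3/2 : ℝ) (1/2))) :=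
          hopen.measure_pos volume hne
      _ ≤ volume (Function.support (fun y : Eu n => (2:ℝ) * bmp (‖y‖^2))) :=
          measure_mono hsub
  have heq : ∫ y : Eu n, phi y = -∫ y : Eu n, (2:ℝ) * bmp (‖y‖^2) := by
    rw [← integral_neg]
    congr 1
    funext y
    rw [phi]; ring
  rw [heq]
  exact neg_ne_zero.2 (ne_of_gt hpos)

lemma fderiv_comp_affine {n : ℕ} {g : Eu n → ℝ} (hg : Differentiable ℝ g)
    (x : Eu n) (r : ℝ) (y e : Eu n) :
    fderiv ℝ (fun z => g (x + r • z)) y e = r * fderiv ℝ g (x + r • y) e := by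
  have hA : HasFDerivAt (fun z : Eu n => x + r • z)
      (r • ContinuousLinearMap.id ℝ (Eu n)) y :=
    ((hasFDerivAt_id y).const_smul r).const_add x
  have hcomp := ((hg (x + r • y)).hasFDerivAt.comp y hA).fderiv
  rw [show (fun z : Eu n => g (x + r • z)) = g ∘ (fun z : Eu n => x + r • z) from rfl, hcomp]
  simp [ContinuousLinearMap.smul_apply, _root_.map_smul, smul_eq_mul]

theorem vanish {n : ℕ} (hn : 0 < n) (v : Eu n → ℝ) (hv : ContDiff ℝ 2 v)
    (hlap : ∀ y, lap v y = 0) (M : ℝ) (hM : ∀ y, |v y| ≤ M)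
    (hsmall : Tendsto v (cocompact (Eu n)) (nhds 0)) : ∀ x, v x = 0 := by
  intro x
  set sgl : Fin n → Eu n := fun i => EuclideanSpace.single i (1:ℝ) with hsgl
  have hv1 : Differentiable ℝ v := hv.differentiable two_ne_zero
  have hfdC : Continuous (fderiv ℝ v) :=
    (hv.fderiv_right (m := 1) (by norm_num)).continuous
  have hpdc1 : ∀ i, ContDiff ℝ 1 (pd (sgl i) v) := fun i =>
    pd_contDiff (m := 1) (sgl i) (by exact_mod_cast hv)
  have hpdpdC : ∀ i, Continuous (pd (sgl i) (pd (sgl i) v)) := fun i =>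
    (pd_contDiff (m := 0) (sgl i) (by exact_mod_cast hpdc1 i)).continuous
  have haffC : ∀ r : ℝ, Continuous (fun y : Eu n => x + r • y) := fun r =>
    continuous_const.add (continuous_id.const_smul r)
  have haffD : ∀ r : ℝ, Differentiable ℝ (fun y : Eu n => x + r • y) := fun r =>
    (differentiable_id.const_smul r).const_add x
  set F : ℝ → ℝ := fun r => ∫ y : Eu n, v (x + r • y) * phi y with hF
  set D : ℝ → ℝ := fun r => ∫ y : Eu n, fderiv ℝ v (x + r • y) y * phi y with hD
  -- integrability helper
  have hint : ∀ (f : Eu n → ℝ), Continuous f →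
      Integrable (fun y : Eu n => f y * phi y) volume := by
    intro f hf
    apply Continuous.integrable_of_hasCompactSupport (hf.mul continuous_phi)
    apply HasCompactSupport.intro (isCompact_closedBall (0 : Eu n) 2)
    intro y hy
    have h2 : (2:ℝ) ≤ ‖y‖ := le_of_not_ge (fun h => hy (mem_closedBall_zero_iff.2 h))
    rw [Pi.mul_apply, phi_zero_of h2, mul_zero]
  have hintPhi : ∀ (f : Eu n → ℝ), Continuous f →
      Integrable (fun y : Eu n => f y * Phi y) volume := by
    intro f hf
    apply Continuous.integrable_of_hasCompactSupport (hf.mul differentiable_Phi.continuous)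
    apply HasCompactSupport.intro (isCompact_closedBall (0 : Eu n) 2)
    intro y hy
    have h2 : (2:ℝ) ≤ ‖y‖ := le_of_not_ge (fun h => hy (mem_closedBall_zero_iff.2 h))
    rw [Pi.mul_apply, Phi_zero_of h2, mul_zero]
  -- derivative of F
  have h_deriv : ∀ r₀ : ℝ, HasDerivAt F (D r₀) r₀ := by
    intro r₀
    set R : ℝ := ‖x‖ + (|r₀| + 1) * 2 with hR
    obtain ⟨K, hK⟩ := (isCompact_closedBall (0 : Eu n) R).exists_bound_of_continuousOn
      hfdC.continuousOn
    have main := hasDerivAt_integral_of_dominated_loc_of_deriv_le (s := ball r₀ 1) (ball_mem_nhds r₀ one_pos)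
      (F := fun r (y : Eu n) => v (x + r • y) * phi y)
      (F' := fun r (y : Eu n) => fderiv ℝ v (x + r • y) y * phi y)
      (bound := fun y : Eu n => K * (‖y‖ * |phi y|))
      (Eventually.of_forall (fun r =>
        (((hv.continuous.comp (haffC r)).mul continuous_phi).aestronglyMeasurable)))
      (hint _ (hv.continuous.comp (haffC r₀)))
      (((hfdC.comp (haffC r₀)).clm_apply continuous_id).mul continuous_phi).aestronglyMeasurable
      (Eventually.of_forall ?_) ?_ (Eventually.of_forall ?_)
    · exact main.2
    · -- bound
      intro y r hr
      by_cases hphi : phi y = 0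
      · simp [hphi]
      · have hy2 : ‖y‖ ≤ 2 := norm_le_two_of_phi_ne hphi
        have hrr : |r| ≤ |r₀| + 1 := by
          have := mem_ball_iff_norm.1 hr
          rw [Real.norm_eq_abs] at this
          calc |r| = |r₀ + (r - r₀)| := by ring_nf
            _ ≤ |r₀| + |r - r₀| := abs_add_le _ _
            _ ≤ |r₀| + 1 := by linarith [abs_sub_comm r r₀ ▸ this.le]
        have hz : x + r • y ∈ closedBall (0 : Eu n) R := by
          rw [mem_closedBall_zero_iff]
          calc ‖x + r • y‖ ≤ ‖x‖ + ‖r • y‖ := norm_add_le _ _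
            _ = ‖x‖ + |r| * ‖y‖ := by rw [norm_smul, Real.norm_eq_abs]
            _ ≤ ‖x‖ + (|r₀| + 1) * 2 := by
                have h0 : (0:ℝ) ≤ |r| := abs_nonneg r
                gcongr
            _ = R := rfl
        have h1 : ‖fderiv ℝ v (x + r • y) y‖ ≤ K * ‖y‖ :=
          le_trans ((fderiv ℝ v (x + r • y)).le_opNorm y)
            (by
              have := hK _ hz
              have h0 : (0:ℝ) ≤ ‖y‖ := norm_nonneg y
              exact mul_le_mul_of_nonneg_right this h0)
        calc ‖fderiv ℝ v (x + r • y) y * phi y‖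
            = ‖fderiv ℝ v (x + r • y) y‖ * |phi y| := by
              simp [Real.norm_eq_abs, abs_mul]
          _ ≤ (K * ‖y‖) * |phi y| := by
              have : (0:ℝ) ≤ |phi y| := abs_nonneg _
              exact mul_le_mul_of_nonneg_right h1 this
          _ = K * (‖y‖ * |phi y|) := by ring
    · -- bound integrable
      apply Continuous.integrable_of_hasCompactSupport
      · exact continuous_const.mul (continuous_norm.mul continuous_phi.abs)
      · apply HasCompactSupport.intro (isCompact_closedBall (0 : Eu n) 2)
        intro y hy
        have h2 : (2:ℝ) ≤ ‖y‖ := le_of_not_ge (fun h => hy (mem_closedBall_zero_iff.2 h))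
        rw [phi_zero_of h2]
        simp
    · -- differentiability in r
      intro y r hr
      have hc : HasDerivAt (fun r : ℝ => x + r • y) y r := by
        simpa using ((hasDerivAt_id r).smul_const y).const_add x
      have := ((hv1 (x + r • y)).hasFDerivAt.comp_hasDerivAt r hc)
      exact this.mul_const (phi y)
  -- D r = 0
  have h_D0 : ∀ r : ℝ, D r = 0 := by
    intro r
    set fi : Fin n → Eu n → ℝ := fun i y => pd (sgl i) v (x + r • y) with hfi
    have c1 : ∀ i, Continuous (fi i) := fun i => ((hpdc1 i).continuous).comp (haffC r)
    have c2 : ∀ i, Differentiable ℝ (fi i) := fun i =>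
      (((hpdc1 i).differentiable one_ne_zero).comp (haffD r))
    have c3 : ∀ i (y : Eu n), fderiv ℝ (fi i) y (sgl i)
        = r * pd (sgl i) (pd (sgl i) v) (x + r • y) := by
      intro i y
      exact fderiv_comp_affine ((hpdc1 i).differentiable one_ne_zero) x r y (sgl i)
    have c4 : ∀ i, Continuous (fun y => fderiv ℝ (fi i) y (sgl i)) := by
      intro i
      have : (fun y => fderiv ℝ (fi i) y (sgl i))
          = fun y => r * pd (sgl i) (pd (sgl i) v) (x + r • y) := funext (c3 i)
      rw [this]
      exact continuous_const.mul ((hpdpdC i).comp (haffC r))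
    have cPhi' : ∀ i, Continuous (fun y : Eu n => fderiv ℝ (Phi (n := n)) y (sgl i)) := by
      intro i
      have : (fun y : Eu n => fderiv ℝ (Phi (n := n)) y (sgl i))
          = fun y : Eu n => phi y * y i := funext (fun y => fderiv_Phi_single y i)
      rw [this]
      exact continuous_phi.mul (PiLp.proj (𝕜 := ℝ) 2 (fun _ : Fin n => ℝ) i).continuous
    have hintStep : ∀ i : Fin n,
        Integrable (fun y : Eu n => fi i y * fderiv ℝ (Phi (n := n)) y (sgl i)) volume := by
      intro i
      apply Continuous.integrable_of_hasCompactSupport ((c1 i).mul (cPhi' i))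
      apply HasCompactSupport.intro (isCompact_closedBall (0 : Eu n) 2)
      intro y hy
      have h2 : (2:ℝ) ≤ ‖y‖ := le_of_not_ge (fun h => hy (mem_closedBall_zero_iff.2 h))
      simp only [Pi.mul_apply]
      rw [fderiv_Phi_single, phi_zero_of h2]
      ring
    have hpt : (fun y : Eu n => fderiv ℝ v (x + r • y) y * phi y)
        = fun y : Eu n => ∑ i, fi i y * fderiv ℝ (Phi (n := n)) y (sgl i) := by
      funext y
      rw [clm_apply_eq_sum (fderiv ℝ v (x + r • y)) y, Finset.sum_mul]
      apply Finset.sum_congr rfl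
      intro i _
      rw [fderiv_Phi_single]
      show y i * pd (sgl i) v (x + r • y) * phi y = fi i y * (phi y * y i)
      rw [hfi]
      ring
    rw [hD]
    simp only
    rw [hpt, integral_finset_sum _ (fun i _ => hintStep i)]
    have hIBP : ∀ i : Fin n,
        ∫ y : Eu n, fi i y * fderiv ℝ (Phi (n := n)) y (sgl i)
          = - ∫ y : Eu n, fderiv ℝ (fi i) y (sgl i) * Phi y := by
      intro i
      exact integral_mul_fderiv_eq_neg_fderiv_mul_of_integrable
        (hintPhi _ (c4 i)) (hintStep i) (hintPhi _ (c1 i)) (fun z _ => c2 i z) (fun z _ => differentiable_Phi z)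
    rw [Finset.sum_congr rfl (fun i _ => hIBP i)]
    rw [Finset.sum_neg_distrib, neg_eq_zero,
      ← integral_finset_sum _ (fun i _ => (hintPhi _ (c4 i)))]
    have hzero : (fun y : Eu n => ∑ i, fderiv ℝ (fi i) y (sgl i) * Phi y) = fun _ => (0:ℝ) := by
      funext y
      have hterm : ∀ i : Fin n, fderiv ℝ (fi i) y (sgl i) * Phi y
          = (r * Phi y) * pd (sgl i) (pd (sgl i) v) (x + r • y) := by
        intro i
        rw [c3 i y]
        ring
      rw [Finset.sum_congr rfl (fun i _ => hterm i), ← Finset.mul_sum]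
      have hl : ∑ i, pd (sgl i) (pd (sgl i) v) (x + r • y) = lap v (x + r • y) := rfl
      rw [hl, hlap, mul_zero]
    rw [hzero]
    simp
  -- F is constant
  have h_const : ∀ r : ℝ, F r = F 0 := by
    intro r
    apply is_const_of_deriv_eq_zero
    · exact fun s => (h_deriv s).differentiableAt
    · intro s
      rw [(h_deriv s).deriv]
      exact h_D0 s
  -- F 0
  have h_F0 : F 0 = v x * ∫ y : Eu n, phi y := by
    rw [hF]
    simp only
    have : (fun y : Eu n => v (x + (0:ℝ) • y) * phi y) = fun y : Eu n => v x * phi y := by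
      funext y
      norm_num
    rw [this, integral_const_mul]
  -- limit of F along ℕ
  have h_lim : Tendsto (fun k : ℕ => F k) atTop (𝓝 0) := by
    have h0 : (0:ℝ) = ∫ _ : Eu n, (0:ℝ) := by simp
    rw [h0]
    apply tendsto_integral_of_dominated_convergence (bound := fun y : Eu n => M * |phi y|)
    · intro k
      exact ((hv.continuous.comp (haffC k)).mul continuous_phi).aestronglyMeasurable
    · apply Continuous.integrable_of_hasCompactSupport
      · exact continuous_const.mul continuous_phi.abs
      · apply HasCompactSupport.intro (isCompact_closedBall (0 : Eu n) 2)
        intro y hy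
        have h2 : (2:ℝ) ≤ ‖y‖ := le_of_not_ge (fun h => hy (mem_closedBall_zero_iff.2 h))
        rw [phi_zero_of h2]
        simp
    · intro k
      apply Eventually.of_forall
      intro y
      calc ‖v (x + (k:ℝ) • y) * phi y‖ = |v (x + (k:ℝ) • y)| * |phi y| := by
            simp [Real.norm_eq_abs, abs_mul]
        _ ≤ M * |phi y| := mul_le_mul_of_nonneg_right (hM _) (abs_nonneg _)
    · apply Eventually.of_forall
      intro y
      by_cases hphi : phi y = 0
      · simp [hphi]
      · have hy1 : 1 ≤ ‖y‖ := one_le_norm_of_phi_ne hphi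
        have htend : Tendsto (fun k : ℕ => x + (k:ℝ) • y) atTop (cocompact (Eu n)) := by
          apply tendsto_cocompact_of_tendsto_dist_comp_atTop (0 : Eu n)
          apply tendsto_atTop_mono (f := fun k : ℕ => (k:ℝ) - ‖x‖)
          · intro k
            have hs : ‖(k:ℝ) • y‖ = (k:ℝ) * ‖y‖ := by
              rw [norm_smul, Real.norm_eq_abs, abs_of_nonneg (Nat.cast_nonneg k)]
            have h2 : ‖(k:ℝ) • y‖ ≤ ‖x + (k:ℝ) • y‖ + ‖x‖ := by
              have := norm_sub_le (x + (k:ℝ) • y) x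
              simpa using this
            have h3 : (k:ℝ) ≤ (k:ℝ) * ‖y‖ := le_mul_of_one_le_right (Nat.cast_nonneg k) hy1
            rw [dist_eq_norm, sub_zero]
            rw [hs] at h2
            linarith
          · exact tendsto_atTop_add_const_right _ (-‖x‖) tendsto_natCast_atTop_atTop
        have := (hsmall.comp htend).mul_const (phi y)
        simpa using this
  -- conclude
  have hconst : Tendsto (fun _ : ℕ => F 0) atTop (𝓝 (F 0)) := tendsto_const_nhds
  have : (fun k : ℕ => F k) = fun _ : ℕ => F 0 := funext (fun k => h_const k)
  rw [this] at h_lim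
  have hF0 : F 0 = 0 := tendsto_nhds_unique hconst h_lim
  rw [h_F0] at hF0
  rcases mul_eq_zero.1 hF0 with h | h
  · exact h
  · exact absurd h (integral_phi_ne hn)

lemma clm_apply_eq_sum' {n : ℕ} {G : Type*} [NormedAddCommGroup G] [NormedSpace ℝ G]
    (ℓ : Eu n →L[ℝ] G) (y : Eu n) :
    ℓ y = ∑ i, y i • ℓ (EuclideanSpace.single i 1) := by
  have hy : y = ∑ i, y i • EuclideanSpace.single i (1:ℝ) := by
    have := (EuclideanSpace.basisFun (Fin n) ℝ).sum_repr y
    simp only [EuclideanSpace.basisFun_repr, EuclideanSpace.basisFun_apply] at this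
    exact this.symm
  conv_lhs => rw [hy]
  rw [map_sum]
  simp

lemma pd_comm4 {n : ℕ} {u : Eu n → ℝ} (hu : ContDiff ℝ 4 u) (a b c : Eu n) :
    pd c (pd c (pd a (pd b u))) = pd a (pd b (pd c (pd c u))) := by
  have h2 : ContDiff ℝ 2 u := hu.of_le (by norm_num)
  have h3 : ∀ e : Eu n, ContDiff ℝ 3 (pd e u) := fun e =>
    pd_contDiff (m := 3) e (by exact_mod_cast hu)
  have h22 : ∀ e e' : Eu n, ContDiff ℝ 2 (pd e (pd e' u)) := fun e e' =>
    pd_contDiff (m := 2) e (by exact_mod_cast h3 e')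
  calc pd c (pd c (pd a (pd b u)))
      = pd c (pd a (pd c (pd b u))) := by
        rw [pd_swap ((h3 b).of_le (by norm_num)) c a]
    _ = pd a (pd c (pd c (pd b u))) := by
        rw [pd_swap (h22 c b) c a]
    _ = pd a (pd c (pd b (pd c u))) := by
        rw [pd_swap h2 c b]
    _ = pd a (pd b (pd c (pd c u))) := by
        rw [pd_swap ((h3 c).of_le (by norm_num)) c b]

/-- An entire biharmonic function whose Hessian decays like (1+|y|)^{2−n}, n ≥ 3,
is affine. -/
theorem biharmonic_hessian_decay_affine (n : ℕ) (hn : 3 ≤ n)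
    (u : EuclideanSpace ℝ (Fin n) → ℝ) (hu : ContDiff ℝ 4 u)
    (hbih : ∀ x, biharm u x = 0)
    (C : ℝ) (hdecay : ∀ y, ‖iteratedFDeriv ℝ 2 u y‖ ≤ C * (1 + ‖y‖) ^ ((2 : ℝ) - (n : ℝ))) :
    ∃ (L : EuclideanSpace ℝ (Fin n) →ₗ[ℝ] ℝ) (b : ℝ), ∀ x, u x = L x + b := by
  have hn0 : 0 < n := by omega
  set sgl : Fin n → Eu n := fun i => EuclideanSpace.single i (1:ℝ) with hsgl
  have hu2 : ContDiff ℝ 2 u := hu.of_le (by norm_num)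
  have h3 : ∀ e : Eu n, ContDiff ℝ 3 (pd e u) := fun e =>
    pd_contDiff (m := 3) e (by exact_mod_cast hu)
  have h22 : ∀ e e' : Eu n, ContDiff ℝ 2 (pd e (pd e' u)) := fun e e' =>
    pd_contDiff (m := 2) e (by exact_mod_cast h3 e')
  have hC0 : 0 ≤ C := by
    have h := hdecay 0
    simp only [norm_zero, add_zero, Real.one_rpow] at h
    exact le_trans (norm_nonneg _) (le_trans h (le_of_eq (mul_one C)))
  -- decay of powers
  have hpow_le_one : ∀ y : Eu n, (1 + ‖y‖) ^ ((2:ℝ) - (n:ℝ)) ≤ 1 := by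
    intro y
    apply Real.rpow_le_one_of_one_le_of_nonpos
    · linarith [norm_nonneg y]
    · have : (3:ℝ) ≤ (n:ℝ) := by exact_mod_cast hn
      linarith
  have hpow_nonneg : ∀ y : Eu n, 0 ≤ (1 + ‖y‖) ^ ((2:ℝ) - (n:ℝ)) := by
    intro y
    apply Real.rpow_nonneg
    linarith [norm_nonneg y]
  have htend : ∀ c : ℝ, Tendsto (fun y : Eu n => c * (1 + ‖y‖) ^ ((2:ℝ) - (n:ℝ)))
      (cocompact (Eu n)) (𝓝 0) := by
    intro c
    have hexp : (0:ℝ) < (n:ℝ) - 2 := by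
      have : (3:ℝ) ≤ (n:ℝ) := by exact_mod_cast hn
      linarith
    have h1 : Tendsto (fun t : ℝ => t ^ (-(((n:ℝ) - 2)))) atTop (𝓝 0) :=
      tendsto_rpow_neg_atTop hexp
    have h2 : Tendsto (fun t : ℝ => (1 + t)) atTop atTop :=
      tendsto_atTop_add_const_left atTop 1 tendsto_id
    have heq : (-(((n:ℝ) - 2))) = (2:ℝ) - (n:ℝ) := by ring
    rw [heq] at h1
    have h3' : Tendsto (fun t : ℝ => (1 + t) ^ ((2:ℝ) - (n:ℝ))) atTop (𝓝 0) := by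
      exact h1.comp h2
    have h4 := h3'.comp (tendsto_norm_cocompact_atTop (E := Eu n))
    have := h4.const_mul c
    simpa using this
  -- Hessian entry bound
  have hess_bound : ∀ (a b : Eu n), ‖a‖ = 1 → ‖b‖ = 1 → ∀ y : Eu n,
      |pd a (pd b u) y| ≤ C * (1 + ‖y‖) ^ ((2:ℝ) - (n:ℝ)) := by
    intro a b ha hb y
    rw [pd_pd_apply hu2 a b y]
    have h1 : fderiv ℝ (fderiv ℝ u) y a b = iteratedFDeriv ℝ 2 u y ![a, b] := by
      rw [iteratedFDeriv_two_apply]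
      simp
    rw [← Real.norm_eq_abs, h1]
    calc ‖iteratedFDeriv ℝ 2 u y ![a, b]‖
        ≤ ‖iteratedFDeriv ℝ 2 u y‖ * ∏ i : Fin 2, ‖(![a, b] : Fin 2 → Eu n) i‖ :=
          (iteratedFDeriv ℝ 2 u y).le_opNorm _
      _ = ‖iteratedFDeriv ℝ 2 u y‖ := by
          rw [Fin.prod_univ_two]
          simp [ha, hb]
      _ ≤ C * (1 + ‖y‖) ^ ((2:ℝ) - (n:ℝ)) := hdecay y
  have hsgl_norm : ∀ i, ‖sgl i‖ = 1 := by
    intro i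
    rw [hsgl]
    simp
  -- lap u as a sum of pd's
  have hlap_eq : ∀ (f : Eu n → ℝ), lap f = fun x => ∑ i, pd (sgl i) (pd (sgl i) f) x :=
    fun f => rfl
  -- Step A : lap u ≡ 0
  have hlapu_C2 : ContDiff ℝ 2 (lap u) := by
    rw [hlap_eq]
    apply ContDiff.sum
    intro i _
    exact h22 (sgl i) (sgl i)
  have hlapu_bound : ∀ y : Eu n, |lap u y| ≤ (n * C) * (1 + ‖y‖) ^ ((2:ℝ) - (n:ℝ)) := by
    intro y
    calc |lap u y| = |∑ i, pd (sgl i) (pd (sgl i) u) y| := rfl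
      _ ≤ ∑ i, |pd (sgl i) (pd (sgl i) u) y| := Finset.abs_sum_le_sum_abs _ _
      _ ≤ ∑ _i : Fin n, C * (1 + ‖y‖) ^ ((2:ℝ) - (n:ℝ)) :=
          Finset.sum_le_sum (fun i _ => hess_bound _ _ (hsgl_norm i) (hsgl_norm i) y)
      _ = (n * C) * (1 + ‖y‖) ^ ((2:ℝ) - (n:ℝ)) := by
          rw [Finset.sum_const, Finset.card_univ, Fintype.card_fin]
          simp [nsmul_eq_mul]
          ring
  have hA : ∀ y, lap u y = 0 := by
    apply vanish hn0 (lap u) hlapu_C2 (fun y => hbih y) (n * C)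
    · intro y
      calc |lap u y| ≤ (n * C) * (1 + ‖y‖) ^ ((2:ℝ) - (n:ℝ)) := hlapu_bound y
        _ ≤ (n * C) * 1 := by
            have : (0:ℝ) ≤ (n:ℝ) * C := by positivity
            exact mul_le_mul_of_nonneg_left (hpow_le_one y) this
        _ = n * C := mul_one _
    · exact squeeze_zero_norm (fun y => by
        rw [Real.norm_eq_abs]; exact hlapu_bound y) (htend (n * C))
  -- Step B : each second derivative vanishes
  have hB : ∀ i j : Fin n, ∀ y : Eu n, pd (sgl i) (pd (sgl j) u) y = 0 := by
    intro i j
    set w : Eu n → ℝ := pd (sgl i) (pd (sgl j) u) with hw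
    have hwC2 : ContDiff ℝ 2 w := h22 (sgl i) (sgl j)
    have hlapw : ∀ y, lap w y = 0 := by
      have hfun : lap w = fun _ => (0:ℝ) := by
        rw [hlap_eq]
        have e1 : ∀ k : Fin n, pd (sgl k) (pd (sgl k) w)
            = pd (sgl i) (pd (sgl j) (pd (sgl k) (pd (sgl k) u))) := fun k =>
          pd_comm4 hu (sgl i) (sgl j) (sgl k)
        have e2 : (fun x => ∑ k, pd (sgl k) (pd (sgl k) w) x)
            = fun x => ∑ k, pd (sgl i) (pd (sgl j) (pd (sgl k) (pd (sgl k) u))) x := by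
          funext x
          exact Finset.sum_congr rfl (fun k _ => by rw [e1 k])
        rw [e2]
        have hd1 : ∀ k : Fin n, Differentiable ℝ (pd (sgl j) (pd (sgl k) (pd (sgl k) u))) := by
          intro k
          have : ContDiff ℝ 1 (pd (sgl j) (pd (sgl k) (pd (sgl k) u))) :=
            pd_contDiff (m := 1) _ (by exact_mod_cast h22 (sgl k) (sgl k))
          exact this.differentiable one_ne_zero
        have e3 : (fun x => ∑ k, pd (sgl i) (pd (sgl j) (pd (sgl k) (pd (sgl k) u))) x)
            = pd (sgl i) (fun x => ∑ k, pd (sgl j) (pd (sgl k) (pd (sgl k) u)) x) := by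
          rw [pd_sum Finset.univ _ (sgl i) (fun k _ => hd1 k)]
        rw [e3]
        have hd2 : ∀ k : Fin n, Differentiable ℝ (pd (sgl k) (pd (sgl k) u)) := fun k =>
          (h22 (sgl k) (sgl k)).differentiable two_ne_zero
        have e4 : (fun x => ∑ k, pd (sgl j) (pd (sgl k) (pd (sgl k) u)) x)
            = pd (sgl j) (fun x => ∑ k, pd (sgl k) (pd (sgl k) u) x) := by
          rw [pd_sum Finset.univ _ (sgl j) (fun k _ => hd2 k)]
        rw [e4]
        have e5 : (fun x => ∑ k, pd (sgl k) (pd (sgl k) u) x) = fun _ => (0:ℝ) := by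
          funext x
          exact hA x
        rw [e5]
        have e6 : pd (sgl j) (fun _ : Eu n => (0:ℝ)) = fun _ => (0:ℝ) := by
          funext x
          show fderiv ℝ (fun _ : Eu n => (0:ℝ)) x (sgl j) = 0
          rw [fderiv_const_apply]
          simp
        rw [e6]
        funext x
        show fderiv ℝ (fun _ : Eu n => (0:ℝ)) x (sgl i) = 0
        rw [fderiv_const_apply]
        simp
      intro y
      rw [hfun]
    apply vanish hn0 w hwC2 hlapw C
    · intro y
      calc |w y| ≤ C * (1 + ‖y‖) ^ ((2:ℝ) - (n:ℝ)) :=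
            hess_bound _ _ (hsgl_norm i) (hsgl_norm j) y
        _ ≤ C * 1 := mul_le_mul_of_nonneg_left (hpow_le_one y) hC0
        _ = C := mul_one _
    · exact squeeze_zero_norm (fun y => by
        rw [Real.norm_eq_abs]
        exact hess_bound _ _ (hsgl_norm i) (hsgl_norm j) y) (htend C)
  -- Step C : the full second derivative vanishes
  have hC : ∀ y : Eu n, fderiv ℝ (fderiv ℝ u) y = 0 := by
    intro y
    ext e e'
    have h1 : fderiv ℝ (fderiv ℝ u) y e = ∑ i, e i • fderiv ℝ (fderiv ℝ u) y (sgl i) :=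
      clm_apply_eq_sum' (fderiv ℝ (fderiv ℝ u) y) e
    rw [h1]
    simp only [ContinuousLinearMap.coe_sum', Finset.sum_apply, ContinuousLinearMap.coe_smul',
      Pi.smul_apply, ContinuousLinearMap.zero_apply]
    apply Finset.sum_eq_zero
    intro i _
    have h2 : fderiv ℝ (fderiv ℝ u) y (sgl i) e'
        = ∑ j, e' j • fderiv ℝ (fderiv ℝ u) y (sgl i) (sgl j) := by
      have := clm_apply_eq_sum' (fderiv ℝ (fderiv ℝ u) y (sgl i)) e'
      simpa using this
    rw [h2]
    rw [Finset.smul_sum]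
    apply Finset.sum_eq_zero
    intro j _
    have h3 : fderiv ℝ (fderiv ℝ u) y (sgl i) (sgl j) = 0 := by
      rw [← pd_pd_apply hu2 (sgl i) (sgl j) y]
      exact hB i j y
    rw [h3]
    simp
  -- Step D : conclude
  have hdu : Differentiable ℝ (fderiv ℝ u) :=
    (hu2.fderiv_right (m := 1) (by norm_num)).differentiable one_ne_zero
  have hconst : ∀ z : Eu n, fderiv ℝ u z = fderiv ℝ u 0 := fun z =>
    is_const_of_fderiv_eq_zero hdu hC z 0
  set L0 : Eu n →L[ℝ] ℝ := fderiv ℝ u 0 with hL0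
  refine ⟨L0.toLinearMap, u 0, ?_⟩
  intro z
  have hgdiff : Differentiable ℝ (fun t : Eu n => u t - L0 t) :=
    (hu2.differentiable two_ne_zero).sub L0.differentiable
  have hgz : ∀ t : Eu n, fderiv ℝ (fun t : Eu n => u t - L0 t) t = 0 := by
    intro t
    rw [fderiv_fun_sub ((hu2.differentiable two_ne_zero) t)
      L0.differentiableAt]
    rw [L0.fderiv]
    rw [← hconst t]
    simp
  have hg : ∀ t : Eu n, u t - L0 t = u 0 - L0 0 := fun t =>
    is_const_of_fderiv_eq_zero (𝕜 := ℝ) hgdiff hgz t 0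
  have := hg z
  rw [map_zero, sub_zero] at this
  have : u z = L0 z + u 0 := by linarith
  simpa using this
end
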